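/- arXiv:2208.03794 — 4 statements merged into one kernel-verified Lean document; each statement's English description precedes it below -/
import Mathlib

section
/- Let 1 ≤ k ≤ n be integers. There exists a constant θ = θ(n,k) > 0 (one may take θ = k/n) such that for every λ = (λ_1,…,λ_n) in the closure of Γ_k with λ_1 ≥ λ_2 ≥ ⋯ ≥ λ_n and for every index i ∈ {1,…,n}, one has λ_1 S_{k−1}(λ|i) ≥ θ S_k(λ). -/
open Finset

/-- `S_m(λ)`: the `m`-th elementary symmetric polynomial of `λ ∈ ℝⁿ`
(`S_0 = 1`, and `S_m = 0` when `m > n`). -/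
noncomputable def esymmS (n m : ℕ) (lam : Fin n → ℝ) : ℝ :=
  ∑ A ∈ Finset.univ.powersetCard m, ∏ j ∈ A, lam j

/-- `S_m(λ|i)`: `S_m` applied to the vector obtained from `λ` by deleting the `i`-th entry. -/
noncomputable def esymmSdel (n m : ℕ) (lam : Fin n → ℝ) (i : Fin n) : ℝ :=
  ∑ A ∈ (Finset.univ.erase i).powersetCard m, ∏ j ∈ A, lam j

/-- `S_m(λ|ij)`: `S_m` applied to the vector obtained from `λ` by deleting the
`i`-th and `j`-th entries. -/
noncomputable def esymmSdel2 (n m : ℕ) (lam : Fin n → ℝ) (i j : Fin n) : ℝ :=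
  ∑ A ∈ ((Finset.univ.erase i).erase j).powersetCard m, ∏ l ∈ A, lam l

/-- The Gårding cone `Γ_k = {λ : S_m(λ) > 0 for all 1 ≤ m ≤ k}`. -/
def GammaCone (n k : ℕ) : Set (Fin n → ℝ) :=
  {lam | ∀ m, 1 ≤ m → m ≤ k → 0 < esymmS n m lam}

/-- The closure of the Gårding cone: `{λ : S_m(λ) ≥ 0 for all 1 ≤ m ≤ k}`. -/
def GammaConeBar (n k : ℕ) : Set (Fin n → ℝ) :=
  {lam | ∀ m, 1 ≤ m → m ≤ k → 0 ≤ esymmS n m lam}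

namespace SixAux

open Multiset Polynomial

lemma mesymm_zero (s : Multiset ℝ) : s.esymm 0 = 1 := by
  simp [Multiset.esymm]

lemma mesymm_cons (a : ℝ) (s : Multiset ℝ) (m : ℕ) :
    (a ::ₘ s).esymm (m + 1) = s.esymm (m + 1) + a * s.esymm m := by
  simp only [Multiset.esymm, Multiset.powersetCard_cons, Multiset.map_add, Multiset.sum_add,
    Multiset.map_map, Function.comp_def, Multiset.prod_cons]
  rw [← Multiset.sum_map_mul_left]

lemma mesymm_eq_zero (s : Multiset ℝ) (m : ℕ) (h : Multiset.card s < m) : s.esymm m = 0 := by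
  induction s using Multiset.induction generalizing m with
  | empty =>
    obtain ⟨m, rfl⟩ : ∃ m', m = m' + 1 := ⟨m - 1, by omega⟩
    simp [Multiset.esymm, Multiset.powersetCard_zero_right]
  | cons a s ih =>
    obtain ⟨m, rfl⟩ : ∃ m', m = m' + 1 := ⟨m - 1, by omega⟩
    simp only [Multiset.card_cons] at h
    rw [mesymm_cons, ih _ (by omega), ih _ (by omega)]
    ring

lemma mesymm_card (s : Multiset ℝ) : s.esymm (Multiset.card s) = s.prod := by
  induction s using Multiset.induction with
  | empty => simp [Multiset.esymm]
  | cons a s ih =>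
    rw [Multiset.card_cons, mesymm_cons, mesymm_eq_zero s _ (by omega), ih, Multiset.prod_cons]
    ring







lemma mesymm_one (s : Multiset ℝ) : s.esymm 1 = s.sum := by
  induction s using Multiset.induction with
  | empty => simp [Multiset.esymm, Multiset.powersetCard_eq_empty 1 (s := (0 : Multiset ℝ)) (by simp)]
  | cons a s ih => rw [show (1:ℕ) = 0 + 1 from rfl, mesymm_cons, mesymm_zero, Multiset.sum_cons, ih]; ring

lemma sq_mesymm_one (s : Multiset ℝ) :
    (s.esymm 1) ^ 2 = (s.map (fun x => x ^ 2)).sum + 2 * s.esymm 2 := by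
  induction s using Multiset.induction with
  | empty => simp [Multiset.esymm, Multiset.powersetCard_eq_empty 1 (s := (0 : Multiset ℝ)) (by simp), Multiset.powersetCard_eq_empty 2 (s := (0 : Multiset ℝ)) (by simp)]
  | cons a s ih =>
    rw [show (2:ℕ) = 1 + 1 from rfl] at *
    rw [mesymm_cons, mesymm_cons, mesymm_zero, Multiset.map_cons,
      Multiset.sum_cons]
    rw [show (0+1) = 1 from rfl] at *
    rw [mesymm_one] at *
    ring_nf
    ring_nf at ih
    linarith [ih]

lemma ms_cauchy (s : Multiset ℝ) :
    s.sum ^ 2 ≤ (Multiset.card s : ℝ) * (s.map (fun x => x ^ 2)).sum := by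
  induction s using Multiset.induction with
  | empty => simp
  | cons a s ih =>
    rw [Multiset.sum_cons, Multiset.map_cons, Multiset.sum_cons, Multiset.card_cons]
    push_cast
    have h1 : (0:ℝ) ≤ (Multiset.card s : ℝ) := by positivity
    have h2 : (0:ℝ) ≤ (s.map (fun x => x ^ 2)).sum := by
      apply Multiset.sum_nonneg; intro x hx
      obtain ⟨y, _, rfl⟩ := Multiset.mem_map.1 hx
      positivity
    rcases Multiset.empty_or_exists_mem s with rfl | ⟨x, hx⟩
    · simp
    · have hc1 : (1:ℝ) ≤ (Multiset.card s : ℝ) := by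
        have h : 0 < Multiset.card s := Multiset.card_pos.2 (by rintro rfl; simp at hx)
        exact_mod_cast h
      nlinarith [sq_nonneg ((Multiset.card s : ℝ) * a - s.sum), ih, h2, hc1]

/-- Newton base case `m = 1`: `C(N,2) e₁² ≥ N² e₂`. -/
lemma newton_base (s : Multiset ℝ) :
    ((Multiset.card s).choose 1 : ℝ) ^ 2 * (s.esymm 0 * s.esymm 2) ≤
      ((Multiset.card s).choose 0 : ℝ) * ((Multiset.card s).choose 2) * (s.esymm 1) ^ 2 := by
  have hcs := ms_cauchy s
  have h1 := sq_mesymm_one s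
  set N := Multiset.card s with hN
  have hch2 : ((N.choose 2 : ℕ) : ℝ) * 2 = (N : ℝ) * ((N:ℝ) - 1) := by
    rcases Nat.eq_zero_or_pos N with h | h
    · simp [h]
    · have : N.choose 2 * 2 = N * (N - 1) := by
        rw [Nat.choose_two_right]
        rw [Nat.div_mul_cancel (Nat.even_mul_pred_self N).two_dvd]
      have := congrArg (fun x : ℕ => (x : ℝ)) this
      push_cast at this
      rw [Nat.cast_sub h] at this
      push_cast at this
      linarith [this]
  rw [mesymm_one] at h1
  rw [mesymm_zero, Nat.choose_one_right, Nat.choose_zero_right, mesymm_one]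
  set Q := (s.map (fun x => x ^ 2)).sum with hQ
  have hQdef : 2 * s.esymm 2 = s.sum ^ 2 - Q := by linarith [h1]
  have hN0 : (0:ℝ) ≤ (N:ℝ) := Nat.cast_nonneg N
  have key : (N:ℝ) * s.sum ^ 2 ≤ (N:ℝ) ^ 2 * Q := by nlinarith [hcs, hN0]
  calc (N:ℝ) ^ 2 * (1 * s.esymm 2) = ((N:ℝ) ^ 2 * (2 * s.esymm 2)) / 2 := by ring
    _ = ((N:ℝ) ^ 2 * s.sum ^ 2 - (N:ℝ) ^ 2 * Q) / 2 := by rw [hQdef]; ring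
    _ ≤ ((N:ℝ) ^ 2 * s.sum ^ 2 - (N:ℝ) * s.sum ^ 2) / 2 := by linarith [key]
    _ = (↑(N.choose 2) * 2 * s.sum ^ 2) / 2 := by rw [hch2]; ring
    _ = ((1:ℕ):ℝ) * ↑(N.choose 2) * s.sum ^ 2 := by push_cast; ring

lemma mesymm_inv (s : Multiset ℝ) (hs : ∀ x ∈ s, x ≠ 0) :
    ∀ i j : ℕ, i + j = Multiset.card s →
      (s.map (fun x => x⁻¹)).esymm j * s.prod = s.esymm i := by
  induction s using Multiset.induction with
  | empty =>
    intro i j hij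
    simp only [Multiset.card_zero] at hij
    obtain ⟨rfl, rfl⟩ : i = 0 ∧ j = 0 := by omega
    simp [mesymm_zero]
  | cons a s ih =>
    intro i j hij
    have ha : a ≠ 0 := hs a (Multiset.mem_cons_self a s)
    have hs' : ∀ x ∈ s, x ≠ 0 := fun x hx => hs x (Multiset.mem_cons_of_mem hx)
    rw [Multiset.card_cons] at hij
    rw [Multiset.map_cons, Multiset.prod_cons]
    rcases j with _ | j
    · -- j = 0, i = card s + 1
      rw [mesymm_zero, one_mul]
      have : i = Multiset.card (a ::ₘ s) := by simp; omega
      rw [this, mesymm_card, Multiset.prod_cons]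
    · rw [mesymm_cons]
      rcases i with _ | i
      · -- i = 0 : j = card s
        have hj : j = Multiset.card s := by omega
        rw [mesymm_zero]
        have e1 : (Multiset.map (fun x => x⁻¹) s).esymm (j+1) = 0 := by
          apply mesymm_eq_zero; rw [Multiset.card_map]; omega
        have e2 := ih hs' 0 j (by omega)
        rw [mesymm_zero] at e2
        rw [e1]
        calc (0 + a⁻¹ * (Multiset.map (fun x => x⁻¹) s).esymm j) * (a * s.prod)
            = (a⁻¹ * a) * ((Multiset.map (fun x => x⁻¹) s).esymm j * s.prod) := by ring
          _ = 1 := by rw [inv_mul_cancel₀ ha, e2]; ring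
      · -- i+1, j+1
        have e1 := ih hs' (i+1) j (by omega)
        have e2 := ih hs' i (j+1) (by omega)
        rw [mesymm_cons]
        calc ((Multiset.map (fun x => x⁻¹) s).esymm (j+1) + a⁻¹ * (Multiset.map (fun x => x⁻¹) s).esymm j) * (a * s.prod)
            = a * ((Multiset.map (fun x => x⁻¹) s).esymm (j+1) * s.prod)
              + (a⁻¹ * a) * ((Multiset.map (fun x => x⁻¹) s).esymm j * s.prod) := by ring
          _ = (s.esymm (i+1) + a * s.esymm i) := by rw [inv_mul_cancel₀ ha, e1, e2]; ring



lemma derivative_esymm (s : Multiset ℝ) (hs : s ≠ 0) :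
    ∃ s' : Multiset ℝ, Multiset.card s' + 1 = Multiset.card s ∧
      ∀ j, j + 1 ≤ Multiset.card s →
        (Multiset.card s : ℝ) * s'.esymm j = ((Multiset.card s - j : ℕ) : ℝ) * s.esymm j := by
  classical
  set N := Multiset.card s with hN
  have hN1 : 1 ≤ N := by
    rw [hN]; exact Multiset.card_pos.2 hs
  set p : Polynomial ℝ := (s.map fun a => Polynomial.X - Polynomial.C a).prod with hp
  have hmon : p.Monic := by
    apply Polynomial.monic_multiset_prod_of_monic
    intro a _; exact Polynomial.monic_X_sub_C a
  have hdeg : p.natDegree = N := by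
    rw [hp, Polynomial.natDegree_multiset_prod_of_monic]
    · rw [Multiset.map_map]
      simp [Function.comp_def, Polynomial.natDegree_X_sub_C]
      exact hN.symm
    · intro f hf
      obtain ⟨a, _, rfl⟩ := Multiset.mem_map.1 hf
      exact Polynomial.monic_X_sub_C a
  have hroots : p.roots = s := Polynomial.roots_multiset_prod_X_sub_C s
  set q := Polynomial.derivative p with hq
  have hqdeg_le : q.natDegree ≤ N - 1 := by
    rw [hq, ← hdeg]; exact Polynomial.natDegree_derivative_le p
  have hqcard_le : Multiset.card q.roots ≤ N - 1 :=
    le_trans (Polynomial.card_roots' q) hqdeg_le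
  have hqcard : Multiset.card q.roots = N - 1 := by
    have h1 : Multiset.card p.roots ≤ Multiset.card q.roots + 1 :=
      Polynomial.card_roots_le_derivative p
    rw [hroots, ← hN] at h1
    omega
  have hqdeg : q.natDegree = N - 1 := by
    have := Polynomial.card_roots' q
    omega
  -- leading coeff of q
  have hcoeffq : ∀ j, j + 1 ≤ N → q.coeff (N - 1 - j) = (((N - j : ℕ)) : ℝ) * p.coeff (N - j) := by
    intro j hj
    rw [hq, Polynomial.coeff_derivative]
    have h1 : N - 1 - j + 1 = N - j := by omega
    rw [h1]
    have h2 : ((N - 1 - j : ℕ) : ℝ) + 1 = ((N - j : ℕ) : ℝ) := by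
      have : (N - 1 - j) + 1 = N - j := by omega
      exact_mod_cast congrArg (fun x : ℕ => (x : ℝ)) this
    rw [h2]; ring
  have hql : q.leadingCoeff = (N : ℝ) := by
    rw [Polynomial.leadingCoeff, hqdeg]
    have := hcoeffq 0 (by omega)
    simp only [Nat.sub_zero] at this
    rw [this]
    have : p.coeff N = 1 := by
      have := hmon
      rw [Polynomial.Monic, Polynomial.leadingCoeff, hdeg] at this
      exact this
    rw [this, mul_one]
  refine ⟨q.roots, by omega, ?_⟩
  intro j hj
  have hvq : q.coeff (N - 1 - j) =
      q.leadingCoeff * (-1) ^ (q.natDegree - (N - 1 - j)) * q.roots.esymm (q.natDegree - (N - 1 - j)) := by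
    apply Polynomial.coeff_eq_esymm_roots_of_card
    · rw [hqcard, hqdeg]
    · omega
  have hvp : p.coeff (N - j) =
      p.leadingCoeff * (-1) ^ (p.natDegree - (N - j)) * p.roots.esymm (p.natDegree - (N - j)) := by
    apply Polynomial.coeff_eq_esymm_roots_of_card
    · rw [hroots, hdeg, hN]
    · omega
  have e1 : q.natDegree - (N - 1 - j) = j := by omega
  have e2 : p.natDegree - (N - j) = j := by omega
  rw [e1, hql] at hvq
  rw [e2, hroots, hmon.leadingCoeff, one_mul] at hvp
  have := hcoeffq j hj
  rw [hvq, hvp] at this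
  have hsign : ((-1 : ℝ) ^ j) * ((-1 : ℝ) ^ j) = 1 := by
    rw [← pow_add]
    exact Even.neg_one_pow ⟨j, rfl⟩
  calc (N : ℝ) * q.roots.esymm j
      = ((-1:ℝ)^j * ((N:ℝ) * (-1)^j * q.roots.esymm j)) := by
        rw [show (N:ℝ) * (-1:ℝ)^j * q.roots.esymm j = (-1:ℝ)^j * ((N:ℝ) * q.roots.esymm j) by ring]
        rw [← mul_assoc, hsign, one_mul]
    _ = (-1:ℝ)^j * (((N - j : ℕ):ℝ) * ((-1)^j * s.esymm j)) := by rw [this]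
    _ = ((N - j : ℕ):ℝ) * s.esymm j := by
        rw [show (-1:ℝ)^j * (((N - j : ℕ):ℝ) * ((-1)^j * s.esymm j)) = ((-1:ℝ)^j * (-1)^j) * (((N - j : ℕ):ℝ) * s.esymm j) by ring, hsign, one_mul]

lemma choose_aux (N j : ℕ) (h : j + 1 ≤ N) : N * (N - 1).choose j = N.choose j * (N - j) := by
  have h1 := Nat.add_one_mul_choose_eq (N - 1) (N - 1 - j)
  have e1 : N - 1 + 1 = N := by omega
  have e2 : N - 1 - j + 1 = N - j := by omega
  rw [e1, e2] at h1
  rw [show N - 1 - j = (N - 1) - j from rfl, Nat.choose_symm (by omega : j ≤ N - 1)] at h1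
  rw [Nat.choose_symm (by omega : j ≤ N)] at h1
  exact h1

theorem newton_ineq : ∀ (N : ℕ) (s : Multiset ℝ), Multiset.card s = N → ∀ r : ℕ, r + 2 ≤ N →
    ((N.choose (r+1) : ℕ) : ℝ) ^ 2 * (s.esymm r * s.esymm (r+2)) ≤
      ((N.choose r : ℕ) : ℝ) * ((N.choose (r+2) : ℕ) : ℝ) * (s.esymm (r+1)) ^ 2 := by
  intro N
  induction N using Nat.strong_induction_on with
  | _ N ih =>
    intro s hcard r hr
    rcases eq_or_lt_of_le hr with htop | hlt
    · -- top case : r + 2 = N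
      rcases le_or_gt (s.esymm r * s.esymm (r+2)) 0 with hsign | hsign
      · have hL : ((N.choose (r+1) : ℕ) : ℝ) ^ 2 * (s.esymm r * s.esymm (r+2)) ≤ 0 :=
          mul_nonpos_of_nonneg_of_nonpos (by positivity) hsign
        have hR : (0:ℝ) ≤ ((N.choose r : ℕ) : ℝ) * ((N.choose (r+2) : ℕ) : ℝ) * (s.esymm (r+1)) ^ 2 := by
          positivity
        linarith
      · -- e_r * e_{r+2} > 0, r + 2 = N
        have hN : Multiset.card s = r + 2 := by omega
        have hprod : s.esymm (r+2) = s.prod := by rw [← hN, mesymm_card]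
        have hprodne : s.prod ≠ 0 := by
          intro h0
          rw [hprod, h0, mul_zero] at hsign
          exact lt_irrefl _ hsign
        have hne : ∀ x ∈ s, x ≠ 0 := by
          intro x hx hx0
          exact hprodne (Multiset.prod_eq_zero (hx0 ▸ hx))
        set s' := s.map (fun x : ℝ => x⁻¹) with hs'
        have hcard' : Multiset.card s' = N := by rw [hs', Multiset.card_map, hcard]
        have hbase := newton_base s'
        rw [hcard'] at hbase
        have h1 : s'.esymm 1 * s.prod = s.esymm (r+1) := mesymm_inv s hne (r+1) 1 (by omega)
        have h2 : s'.esymm 2 * s.prod = s.esymm r := mesymm_inv s hne r 2 (by omega)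
        rw [mesymm_zero] at hbase
        -- rewrite choose values
        have c1 : N.choose (r+1) = N.choose 1 := by
          rw [← Nat.choose_symm (by omega : 1 ≤ N), show N - 1 = r + 1 by omega]
        have c2 : N.choose r = N.choose 2 := by
          rw [← Nat.choose_symm (by omega : 2 ≤ N), show N - 2 = r by omega]
        have c3 : N.choose (r+2) = 1 := by rw [← htop, Nat.choose_self]
        rw [c1, c2, c3, hprod]
        have hmul := mul_le_mul_of_nonneg_right hbase (sq_nonneg s.prod)
        calc ((N.choose 1 : ℕ) : ℝ) ^ 2 * (s.esymm r * s.prod)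
            = ((N.choose 1 : ℕ) : ℝ) ^ 2 * ((s'.esymm 2 * s.prod) * s.prod) := by rw [h2]
          _ = ((N.choose 1 : ℕ) : ℝ) ^ 2 * (1 * s'.esymm 2) * s.prod ^ 2 := by ring
          _ ≤ ((N.choose 0 : ℕ) : ℝ) * ((N.choose 2 : ℕ) : ℝ) * s'.esymm 1 ^ 2 * s.prod ^ 2 := hmul
          _ = ((N.choose 0 : ℕ) : ℝ) * ((N.choose 2 : ℕ) : ℝ) * (s'.esymm 1 * s.prod) ^ 2 := by ring
          _ = ((N.choose 2 : ℕ) : ℝ) * ((1 : ℕ) : ℝ) * (s.esymm (r+1)) ^ 2 := by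
              rw [h1, Nat.choose_zero_right]; push_cast; ring
    · -- derivative case : r + 2 < N
      have hs0 : s ≠ 0 := by
        intro h0
        rw [h0] at hcard; simp at hcard; omega
      obtain ⟨s', hcard', hE⟩ := derivative_esymm s hs0
      rw [hcard] at hcard' hE
      have hIH := ih (N-1) (by omega) s' (by omega) r (by omega)
      -- esymm transfer equations
      have E0 : (N:ℝ) * s'.esymm r = ((N - r : ℕ) : ℝ) * s.esymm r := hE r (by omega)
      have E1 : (N:ℝ) * s'.esymm (r+1) = ((N - (r+1) : ℕ) : ℝ) * s.esymm (r+1) := hE (r+1) (by omega)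
      have E2 : (N:ℝ) * s'.esymm (r+2) = ((N - (r+2) : ℕ) : ℝ) * s.esymm (r+2) := hE (r+2) (by omega)
      -- choose transfer equations (cast to ℝ)
      have Ca : (N:ℝ) * ((N-1).choose r : ℕ) = ((N.choose r : ℕ) : ℝ) * ((N - r : ℕ) : ℝ) := by
        exact_mod_cast congrArg (fun x : ℕ => (x : ℝ)) (choose_aux N r (by omega))
      have Cb : (N:ℝ) * ((N-1).choose (r+1) : ℕ) = ((N.choose (r+1) : ℕ) : ℝ) * ((N - (r+1) : ℕ) : ℝ) := by
        exact_mod_cast congrArg (fun x : ℕ => (x : ℝ)) (choose_aux N (r+1) (by omega))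
      have Cc : (N:ℝ) * ((N-1).choose (r+2) : ℕ) = ((N.choose (r+2) : ℕ) : ℝ) * ((N - (r+2) : ℕ) : ℝ) := by
        exact_mod_cast congrArg (fun x : ℕ => (x : ℝ)) (choose_aux N (r+2) (by omega))
      have hu0 : (0:ℝ) < ((N - r : ℕ) : ℝ) := by
        have h : 0 < N - r := by omega
        exact_mod_cast h
      have hu1 : (0:ℝ) < ((N - (r+1) : ℕ) : ℝ) := by
        have h : 0 < N - (r+1) := by omega
        exact_mod_cast h
      have hu2 : (0:ℝ) < ((N - (r+2) : ℕ) : ℝ) := by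
        have h : 0 < N - (r+2) := by omega
        exact_mod_cast h
      set u0 : ℝ := ((N - r : ℕ) : ℝ) with hu0d
      set u1 : ℝ := ((N - (r+1) : ℕ) : ℝ) with hu1d
      set u2 : ℝ := ((N - (r+2) : ℕ) : ℝ) with hu2d
      have H := mul_le_mul_of_nonneg_left hIH (show (0:ℝ) ≤ (N:ℝ)^4 by positivity)
      have main : (u0 * u1^2 * u2) * (((N.choose (r+1) : ℕ) : ℝ) ^ 2 * (s.esymm r * s.esymm (r+2)))
          ≤ (u0 * u1^2 * u2) * (((N.choose r : ℕ) : ℝ) * ((N.choose (r+2) : ℕ) : ℝ) * (s.esymm (r+1)) ^ 2) := by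
        calc (u0 * u1^2 * u2) * (((N.choose (r+1) : ℕ) : ℝ) ^ 2 * (s.esymm r * s.esymm (r+2)))
            = ((((N.choose (r+1) : ℕ) : ℝ) * u1) ^ 2) * ((u0 * s.esymm r) * (u2 * s.esymm (r+2))) := by ring
          _ = (((N:ℝ) * ((N-1).choose (r+1) : ℕ)) ^ 2) * ((((N:ℝ) * s'.esymm r)) * (((N:ℝ) * s'.esymm (r+2)))) := by
              rw [Cb, E0, E2]
          _ = (N:ℝ)^4 * ((((N-1).choose (r+1) : ℕ) : ℝ) ^ 2 * (s'.esymm r * s'.esymm (r+2))) := by push_cast; ring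
          _ ≤ (N:ℝ)^4 * ((((N-1).choose r : ℕ) : ℝ) * ((((N-1).choose (r+2) : ℕ)) : ℝ) * (s'.esymm (r+1)) ^ 2) := H
          _ = (((N:ℝ) * ((N-1).choose r : ℕ)) * ((N:ℝ) * ((N-1).choose (r+2) : ℕ))) * (((N:ℝ) * s'.esymm (r+1)) ^ 2) := by
              push_cast; ring
          _ = ((((N.choose r : ℕ) : ℝ) * u0) * (((N.choose (r+2) : ℕ) : ℝ) * u2)) * ((u1 * s.esymm (r+1)) ^ 2) := by
              rw [Ca, Cc, E1]
          _ = (u0 * u1^2 * u2) * (((N.choose r : ℕ) : ℝ) * ((N.choose (r+2) : ℕ) : ℝ) * (s.esymm (r+1)) ^ 2) := by ring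
      have hK : 0 < u0 * u1^2 * u2 := by positivity
      exact le_of_mul_le_mul_left main hK

lemma esymmS_eq (n m : ℕ) (lam : Fin n → ℝ) :
    esymmS n m lam = ((univ : Finset (Fin n)).val.map lam).esymm m := by
  rw [esymmS, Finset.esymm_map_val]

lemma esymmSdel_eq (n m : ℕ) (lam : Fin n → ℝ) (i : Fin n) :
    esymmSdel n m lam i = (((univ : Finset (Fin n)).erase i).val.map lam).esymm m := by
  rw [esymmSdel, Finset.esymm_map_val]

lemma esymmSdel2_eq (n m : ℕ) (lam : Fin n → ℝ) (i j : Fin n) :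
    esymmSdel2 n m lam i j = ((((univ : Finset (Fin n)).erase i).erase j).val.map lam).esymm m := by
  rw [esymmSdel2, Finset.esymm_map_val]

lemma cons_decomp {n : ℕ} (lam : Fin n → ℝ) (s : Finset (Fin n)) (i : Fin n) (h : i ∈ s) :
    s.val.map lam = lam i ::ₘ (s.erase i).val.map lam := by
  have h1 : s.val = i ::ₘ (s.erase i).val := by
    rw [Finset.erase_val]
    exact (Multiset.cons_erase (by exact_mod_cast h)).symm
  rw [h1, Multiset.map_cons]

lemma split_I1 {n m : ℕ} (lam : Fin n → ℝ) (i : Fin n) :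
    esymmS n (m+1) lam = esymmSdel n (m+1) lam i + lam i * esymmSdel n m lam i := by
  rw [esymmS_eq, esymmSdel_eq, esymmSdel_eq, cons_decomp lam univ i (Finset.mem_univ i),
    mesymm_cons]

lemma split_I2 {n m : ℕ} (lam : Fin n → ℝ) (i j : Fin n) (h : j ≠ i) :
    esymmSdel n (m+1) lam i = esymmSdel2 n (m+1) lam i j + lam j * esymmSdel2 n m lam i j := by
  rw [esymmSdel_eq, esymmSdel2_eq, esymmSdel2_eq,
    cons_decomp lam (univ.erase i) j (Finset.mem_erase.2 ⟨h, Finset.mem_univ j⟩), mesymm_cons]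

lemma esymmSdel2_comm {n m : ℕ} (lam : Fin n → ℝ) (i j : Fin n) :
    esymmSdel2 n m lam i j = esymmSdel2 n m lam j i := by
  rw [esymmSdel2, esymmSdel2, Finset.erase_right_comm]

lemma erase_univ_eq_map {n : ℕ} (i : Fin (n+1)) :
    (univ : Finset (Fin (n+1))).erase i = Finset.map i.succAboveEmb univ := by
  have h := Fin.univ_succAbove n i
  rw [h, Finset.erase_cons]

lemma esymmSdel_translate {n m : ℕ} (lam : Fin (n+1) → ℝ) (i : Fin (n+1)) :
    esymmSdel (n+1) m lam i = esymmS n m (lam ∘ i.succAbove) := by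
  rw [esymmSdel_eq, esymmS_eq]
  congr 1
  rw [erase_univ_eq_map, Finset.map_val, Multiset.map_map]
  rfl

lemma esymmSdel2_translate {n m : ℕ} (lam : Fin (n+1) → ℝ) (i : Fin (n+1)) (j : Fin n) :
    esymmSdel2 (n+1) m lam i (i.succAbove j) = esymmSdel n m (lam ∘ i.succAbove) j := by
  rw [esymmSdel2_eq, esymmSdel_eq]
  congr 1
  have h1 : ((univ : Finset (Fin (n+1))).erase i).erase (i.succAbove j)
      = Finset.map i.succAboveEmb ((univ : Finset (Fin n)).erase j) := by
    rw [erase_univ_eq_map, Finset.map_erase]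
    rfl
  rw [h1, Finset.map_val, Multiset.map_map]
  rfl

lemma esymmS_zero {n : ℕ} (lam : Fin n → ℝ) : esymmS n 0 lam = 1 := by
  simp [esymmS]

lemma esymmSdel_zero {n : ℕ} (lam : Fin n → ℝ) (i : Fin n) : esymmSdel n 0 lam i = 1 := by
  simp [esymmSdel]

lemma card_erase_univ {n : ℕ} (i : Fin n) : ((univ : Finset (Fin n)).erase i).card = n - 1 := by
  rw [Finset.card_erase_of_mem (Finset.mem_univ i), Finset.card_univ, Fintype.card_fin]

lemma esymmSdel_eq_zero {n m : ℕ} (lam : Fin n → ℝ) (i : Fin n) (h : n - 1 < m) :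
    esymmSdel n m lam i = 0 := by
  rw [esymmSdel]
  rw [Finset.powersetCard_eq_empty.2 (by rw [card_erase_univ]; exact h)]
  simp

lemma esymmS_one {n : ℕ} (lam : Fin n → ℝ) : esymmS n 1 lam = ∑ j, lam j := by
  rw [esymmS_eq, mesymm_one]
  rfl

lemma esymmS_nonneg {n m : ℕ} {lam : Fin n → ℝ} (h : ∀ j, 0 ≤ lam j) : 0 ≤ esymmS n m lam := by
  rw [esymmS]
  apply Finset.sum_nonneg
  intro A _
  exact Finset.prod_nonneg fun j _ => h j

lemma esymmSdel_nonneg {n m : ℕ} {lam : Fin n → ℝ} {i : Fin n} (h : ∀ j, 0 ≤ lam j) :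
    0 ≤ esymmSdel n m lam i := by
  rw [esymmSdel]
  apply Finset.sum_nonneg
  intro A _
  exact Finset.prod_nonneg fun j _ => h j

lemma esymmSdel_pos {n m : ℕ} {lam : Fin n → ℝ} {i : Fin n} (h : ∀ j, 0 < lam j)
    (hm : m + 1 ≤ n) : 0 < esymmSdel n m lam i := by
  rw [esymmSdel]
  apply Finset.sum_pos
  · intro A _
    exact Finset.prod_pos fun j _ => h j
  · exact Finset.powersetCard_nonempty.2 (by rw [card_erase_univ]; omega)

lemma mesymm_shift (s : Multiset ℝ) (t : ℝ) (m : ℕ) (hm : m ≤ Multiset.card s) :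
    (s.map (fun x => x + t)).esymm m
      = ∑ j ∈ Finset.range (m+1),
          (((Multiset.card s - j).choose (m - j) : ℕ) : ℝ) * t ^ (m - j) * s.esymm j := by
  classical
  obtain ⟨N, hN⟩ : ∃ N, N = Multiset.card s := ⟨_, rfl⟩
  rw [← hN] at hm ⊢
  set P : Polynomial ℝ := (s.map fun a => Polynomial.X + Polynomial.C a).prod with hP
  have hcomp : P.comp (Polynomial.X + Polynomial.C t)
      = ((s.map (fun x => x + t)).map fun a => Polynomial.X + Polynomial.C a).prod := by
    rw [hP, Polynomial.multiset_prod_comp, Multiset.map_map, Multiset.map_map]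
    congr 1
    apply Multiset.map_congr rfl
    intro a _
    simp only [Function.comp_apply, Polynomial.add_comp, Polynomial.X_comp, Polynomial.C_comp]
    rw [add_assoc, ← Polynomial.C_add, add_comm t a]
  have hcard' : Multiset.card (s.map (fun x => x + t)) = N := by rw [Multiset.card_map, ← hN]
  have hR : P.comp (Polynomial.X + Polynomial.C t)
      = ∑ j ∈ Finset.range (N + 1),
          Polynomial.C ((s.map (fun x => x + t)).esymm j) * Polynomial.X ^ (N - j) := by
    rw [hcomp, Multiset.prod_X_add_C_eq_sum_esymm, hcard']
  have hL : P.comp (Polynomial.X + Polynomial.C t)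
      = ∑ j ∈ Finset.range (N + 1),
          Polynomial.C (s.esymm j) * (Polynomial.X + Polynomial.C t) ^ (N - j) := by
    rw [hP, Multiset.prod_X_add_C_eq_sum_esymm, ← hN, Polynomial.sum_comp]

    apply Finset.sum_congr rfl
    intro j _
    rw [Polynomial.mul_comp, Polynomial.C_comp, Polynomial.pow_comp, Polynomial.X_comp]
  -- take coefficient N - m on both sides
  have hcoeffR : (P.comp (Polynomial.X + Polynomial.C t)).coeff (N - m)
      = (s.map (fun x => x + t)).esymm m := by
    rw [hR, Polynomial.finset_sum_coeff]
    rw [Finset.sum_eq_single m]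
    · rw [Polynomial.coeff_C_mul, Polynomial.coeff_X_pow, if_pos rfl, mul_one]
    · intro j hj hne
      rw [Polynomial.coeff_C_mul, Polynomial.coeff_X_pow, if_neg, mul_zero]
      intro heq
      apply hne
      have : j ≤ N := by
        have := Finset.mem_range.1 hj; omega
      omega
    · intro h
      exact absurd (Finset.mem_range.2 (by omega)) h
  have hcoeffL : (P.comp (Polynomial.X + Polynomial.C t)).coeff (N - m)
      = ∑ j ∈ Finset.range (m+1),
          (((N - j).choose (m - j) : ℕ) : ℝ) * t ^ (m - j) * s.esymm j := by
    rw [hL, Polynomial.finset_sum_coeff]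
    have hz : ∀ j ∈ Finset.range (N+1), j ∉ Finset.range (m+1) →
        (Polynomial.C (s.esymm j) * (Polynomial.X + Polynomial.C t) ^ (N - j)).coeff (N - m) = 0 := by
      intro j hj hj'
      rw [Finset.mem_range] at hj hj'
      have hjm : m < j := by omega
      rw [Polynomial.coeff_C_mul, Polynomial.coeff_X_add_C_pow]
      rw [Nat.choose_eq_zero_of_lt (by omega)]
      push_cast
      ring
    rw [← Finset.sum_subset (by intro x hx; rw [Finset.mem_range] at *; omega) hz]
    apply Finset.sum_congr rfl
    intro j hj
    have hjm : j ≤ m := by have := Finset.mem_range.1 hj; omega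
    rw [Polynomial.coeff_C_mul, Polynomial.coeff_X_add_C_pow]
    have e1 : (N - j) - (N - m) = m - j := by omega
    have e2 : (N - j).choose (N - m) = (N - j).choose (m - j) := by
      rw [← e1]
      rw [Nat.choose_symm (by omega)]
    rw [e1, e2]
    ring
  rw [← hcoeffR, hcoeffL]

lemma esymmS_shift {n m : ℕ} (lam : Fin n → ℝ) (t : ℝ) (hm : m ≤ n) :
    esymmS n m (fun j => lam j + t)
      = ∑ j ∈ Finset.range (m+1),
          (((n - j).choose (m - j) : ℕ) : ℝ) * t ^ (m - j) * esymmS n j lam := by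
  have hcard : Multiset.card ((univ : Finset (Fin n)).val.map lam) = n := by
    rw [Multiset.card_map, ← Finset.card_def, Finset.card_univ, Fintype.card_fin]
  have h1 : (univ : Finset (Fin n)).val.map (fun j => lam j + t)
      = ((univ : Finset (Fin n)).val.map lam).map (fun x => x + t) := by
    rw [Multiset.map_map]; rfl
  rw [esymmS_eq, h1, mesymm_shift _ _ _ (by rw [hcard]; exact hm)]
  rw [hcard]
  apply Finset.sum_congr rfl
  intro j _
  rw [esymmS_eq]

lemma gammaCone_mono {n k k' : ℕ} (h : k' ≤ k) : GammaCone n k ⊆ GammaCone n k' :=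
  fun _ hlam m hm1 hm2 => hlam m hm1 (le_trans hm2 h)

lemma gammaCone_le_bar {n k : ℕ} : GammaCone n k ⊆ GammaConeBar n k :=
  fun _ hlam m hm1 hm2 => (hlam m hm1 hm2).le

lemma gammaConeBar_mono {n k k' : ℕ} (h : k' ≤ k) : GammaConeBar n k ⊆ GammaConeBar n k' :=
  fun _ hlam m hm1 hm2 => hlam m hm1 (le_trans hm2 h)

lemma del_nonneg_of_nonpos {n k : ℕ} {lam : Fin n → ℝ} (hG : lam ∈ GammaConeBar n k)
    {i : Fin n} (hi : lam i ≤ 0) : ∀ m, m ≤ k → 0 ≤ esymmSdel n m lam i := by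
  intro m
  induction m with
  | zero => intro _; rw [esymmSdel_zero]; norm_num
  | succ m ih =>
    intro hm
    have h1 := split_I1 (m := m) lam i
    have h2 := hG (m+1) (by omega) hm
    have h3 := ih (by omega)
    nlinarith [h1, h2, h3, mul_nonneg h3 (neg_nonneg.2 hi)]

lemma shift_mem_gamma {n k : ℕ} (hkn : k ≤ n) {lam : Fin n → ℝ}
    (hG : lam ∈ GammaConeBar n k) {t : ℝ} (ht : 0 < t) :
    (fun j => lam j + t) ∈ GammaCone n k := by
  intro m hm1 hmk
  rw [esymmS_shift lam t (le_trans hmk hkn)]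
  apply Finset.sum_pos'
  · intro j hj
    rw [Finset.mem_range] at hj
    have hS : 0 ≤ esymmS n j lam := by
      rcases Nat.eq_zero_or_pos j with rfl | hj0
      · rw [esymmS_zero]; norm_num
      · exact hG j hj0 (by omega)
    positivity
  · refine ⟨0, Finset.mem_range.2 (by omega), ?_⟩
    rw [esymmS_zero, Nat.sub_zero, Nat.sub_zero, mul_one]
    have hch : 0 < n.choose m := Nat.choose_pos (le_trans hmk hkn)
    have : (0:ℝ) < (n.choose m : ℝ) := by exact_mod_cast hch
    positivity

lemma cont_del {n m : ℕ} (lam : Fin n → ℝ) (i : Fin n) :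
    Continuous (fun t : ℝ => esymmSdel n m (fun j => lam j + t) i) := by
  simp only [esymmSdel]
  apply continuous_finset_sum
  intro A _
  apply continuous_finset_prod
  intro j _
  exact continuous_const.add continuous_id

lemma gamma_del_pos : ∀ (k : ℕ), 1 ≤ k → ∀ (n : ℕ) (lam : Fin n → ℝ), k ≤ n →
    lam ∈ GammaCone n k → ∀ i : Fin n, 0 < esymmSdel n (k-1) lam i := by
  intro k
  induction k using Nat.strong_induction_on with
  | _ k ih =>
    intro hk1 n lam hkn hG i
    rcases eq_or_lt_of_le hk1 with hk1' | hk2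
    · -- k = 1
      rw [show k - 1 = 0 by omega, esymmSdel_zero]
      norm_num
    · -- 2 ≤ k
      have hk2' : 2 ≤ k := hk2
      by_contra hneg
      push_neg at hneg
      set F : ℝ → ℝ := fun t => esymmSdel n (k-1) (fun j => lam j + t) i with hF
      have hF0 : F 0 = esymmSdel n (k-1) lam i := by simp [hF]
      set T : ℝ := 1 + ∑ j, |lam j| with hT
      have hTpos : ∀ j, 0 < lam j + T := by
        intro j
        have h1 : |lam j| ≤ ∑ j', |lam j'| :=
          Finset.single_le_sum (fun j' _ => abs_nonneg (lam j')) (Finset.mem_univ j)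
        have h2 : -|lam j| ≤ lam j := neg_abs_le (lam j)
        rw [hT]; linarith
      have hFT : 0 < F T := by
        rw [hF]
        exact esymmSdel_pos hTpos (by omega)
      have hT0 : (0:ℝ) ≤ T := by
        have : (0:ℝ) ≤ ∑ j, |lam j| := Finset.sum_nonneg fun j _ => abs_nonneg (lam j)
        rw [hT]; linarith
      have hmem : (0:ℝ) ∈ Set.Icc (F 0) (F T) := ⟨by rw [hF0]; linarith, hFT.le⟩
      obtain ⟨t₀, ht₀mem, ht₀⟩ := intermediate_value_Icc hT0 (cont_del lam i).continuousOn hmem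
      set mu : Fin n → ℝ := fun j => lam j + t₀ with hmu
      have hmuG : mu ∈ GammaCone n k := by
        rcases eq_or_lt_of_le ht₀mem.1 with h0 | hpos
        · intro m hm1 hm2
          have : mu = lam := by funext j; rw [hmu, ← h0]; ring
          rw [this]; exact hG m hm1 hm2
        · exact shift_mem_gamma hkn (gammaCone_le_bar hG) hpos
      have hdel0 : esymmSdel n (k-1) mu i = 0 := ht₀
      have hsplit : esymmS n k mu = esymmSdel n k mu i + mu i * esymmSdel n (k-1) mu i := by
        have := split_I1 (m := k-1) mu i
        rw [show k - 1 + 1 = k by omega] at this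
        exact this
      have hSk : 0 < esymmS n k mu := hmuG k (by omega) le_rfl
      rcases eq_or_lt_of_le hkn with hkeq | hklt
      · -- k = n
        have hzero : esymmSdel n k mu i = 0 := esymmSdel_eq_zero mu i (by omega)
        rw [hzero, hdel0, mul_zero, add_zero] at hsplit
        linarith [hsplit ▸ hSk]
      · -- k < n : Newton
        have hIH := ih (k-1) (by omega) (by omega) n mu (by omega)
          (gammaCone_mono (by omega) hmuG) i
        rw [show k - 1 - 1 = k - 2 by omega] at hIH
        set ms : Multiset ℝ := ((univ : Finset (Fin n)).erase i).val.map mu with hms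
        have hmscard : Multiset.card ms = n - 1 := by
          rw [hms, Multiset.card_map, ← Finset.card_def, card_erase_univ]
        have hnewton := newton_ineq (n-1) ms hmscard (k-2) (by omega)
        have e0 : ms.esymm (k-2) = esymmSdel n (k-2) mu i := (esymmSdel_eq n (k-2) mu i).symm
        have e1 : ms.esymm (k-2+1) = esymmSdel n (k-1) mu i := by
          rw [show k-2+1 = k-1 by omega]
          exact (esymmSdel_eq n (k-1) mu i).symm
        have e2 : ms.esymm (k-2+2) = esymmSdel n k mu i := by
          rw [show k-2+2 = k by omega]
          exact (esymmSdel_eq n k mu i).symm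
        rw [e0, e1, e2, hdel0] at hnewton
        have hchpos : (0:ℝ) < (((n-1).choose (k-2+1) : ℕ) : ℝ) := by
          have : 0 < (n-1).choose (k-2+1) := Nat.choose_pos (by omega)
          exact_mod_cast this
        have hek : esymmSdel n k mu i ≤ 0 := by
          by_contra hpos
          push_neg at hpos
          have h1 : (0:ℝ) < (((n-1).choose (k-2+1) : ℕ) : ℝ)^2 * (esymmSdel n (k-2) mu i * esymmSdel n k mu i) :=
            mul_pos (pow_pos hchpos 2) (mul_pos hIH hpos)
          have h2 : ((((n-1).choose (k-2)) : ℕ) : ℝ) * (((n-1).choose (k-2+2) : ℕ) : ℝ) * (0:ℝ)^2 = 0 := by ring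
          linarith [hnewton, h1, h2]
        rw [hdel0, mul_zero, add_zero] at hsplit
        linarith [hsplit ▸ hSk]

lemma gamma_bar_del_nonneg {n k : ℕ} (hk1 : 1 ≤ k) (hkn : k ≤ n) {lam : Fin n → ℝ}
    (hG : lam ∈ GammaConeBar n k) (i : Fin n) {m : ℕ} (hm : m ≤ k - 1) :
    0 ≤ esymmSdel n m lam i := by
  have key : ∀ t : ℝ, t ∈ Set.Ioi (0:ℝ) → 0 ≤ esymmSdel n m (fun j => lam j + t) i := by
    intro t ht
    have hmem := shift_mem_gamma hkn hG ht
    have h := gamma_del_pos (m+1) (by omega) n (fun j => lam j + t) (by omega)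
      (gammaCone_mono (by omega) hmem) i
    rw [show m + 1 - 1 = m by omega] at h
    exact h.le
  have h0 : esymmSdel n m (fun j => lam j + (0:ℝ)) i = esymmSdel n m lam i := by simp
  have htend : Filter.Tendsto (fun t : ℝ => esymmSdel n m (fun j => lam j + t) i)
      (nhdsWithin 0 (Set.Ioi 0)) (nhds (esymmSdel n m lam i)) := by
    rw [← h0]
    exact ((cont_del lam i).tendsto 0).mono_left nhdsWithin_le_nhds
  exact ge_of_tendsto htend (eventually_nhdsWithin_of_forall key)

lemma first_nonneg {n k : ℕ} (h0 : 0 < n) (hk1 : 1 ≤ k) {lam : Fin n → ℝ}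
    (hG : lam ∈ GammaConeBar n k) (hA : Antitone lam) : 0 ≤ lam ⟨0, h0⟩ := by
  have h1 := hG 1 le_rfl hk1
  rw [esymmS_one] at h1
  have h2 : ∑ j, lam j ≤ ∑ _j : Fin n, lam ⟨0, h0⟩ :=
    Finset.sum_le_sum (fun j _ => hA (by simp [Fin.le_def]))
  rw [Finset.sum_const, Finset.card_univ, Fintype.card_fin, nsmul_eq_mul] at h2
  have h3 : (0:ℝ) < (n:ℝ) := by exact_mod_cast h0
  nlinarith [h1, h2, h3]

lemma main_aux (k : ℕ) (hk2 : 2 ≤ k) : ∀ n, ∀ hn : k ≤ n, ∀ lam : Fin n → ℝ,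
    lam ∈ GammaConeBar n k → Antitone lam →
    esymmS n k lam ≤ ((n:ℝ) - k + 1) *
      (lam ⟨0, by omega⟩ * esymmSdel n (k-1) lam ⟨0, by omega⟩) := by
  intro n hn
  induction n, hn using Nat.le_induction with
  | base =>
    intro lam hG hA
    have hsplit : esymmS k k lam
        = esymmSdel k k lam ⟨0, by omega⟩ + lam ⟨0, by omega⟩ * esymmSdel k (k-1) lam ⟨0, by omega⟩ := by
      have := split_I1 (m := k-1) lam (⟨0, by omega⟩ : Fin k)
      rw [show k - 1 + 1 = k by omega] at this
      exact this
    rw [esymmSdel_eq_zero lam _ (by omega), zero_add] at hsplit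
    rw [← hsplit]
    have hc : ((k:ℝ) - k + 1) = 1 := by ring
    rw [hc, one_mul]
  | succ N hN ih =>
    intro lam hG hA
    have h0N : (0:ℕ) < N + 1 := by omega
    set i0 : Fin (N+1) := ⟨0, h0N⟩ with hi0
    set a : ℝ := lam i0 with ha
    set d1 : ℝ := esymmSdel (N+1) (k-1) lam i0 with hd1
    set skd : ℝ := esymmSdel (N+1) k lam i0 with hskd
    have hsplit : esymmS (N+1) k lam = skd + a * d1 := by
      have := split_I1 (m := k-1) lam i0
      rw [show k - 1 + 1 = k by omega] at this
      exact this
    have hd1nn : 0 ≤ d1 := gamma_bar_del_nonneg (by omega) (by omega) hG i0 (le_refl (k-1))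
    have hSnn : 0 ≤ esymmS (N+1) k lam := hG k (by omega) le_rfl
    have hcge1 : (1:ℝ) ≤ ((N:ℝ) + 1) - k + 1 := by
      have : (k:ℝ) ≤ (N:ℝ) := by exact_mod_cast hN
      linarith
    have hcast : (((N+1 : ℕ)):ℝ) - k + 1 = ((N:ℝ) + 1) - k + 1 := by push_cast; ring
    rcases le_or_gt skd 0 with hA1 | hB1
    · -- easy case
      have hX : esymmS (N+1) k lam ≤ a * d1 := by linarith [hsplit]
      have hXnn : 0 ≤ a * d1 := le_trans hSnn hX
      rw [hcast]
      nlinarith [hX, hXnn, hcge1]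
    · -- main case
      set mu : Fin N → ℝ := lam ∘ Fin.succ with hmu
      have hcompeq : (lam ∘ (i0).succAbove) = mu := by
        funext j
        exact congrArg lam (Fin.zero_succAbove j)
      have htrans : ∀ m, esymmSdel (N+1) m lam i0 = esymmS N m mu := by
        intro m
        rw [esymmSdel_translate, hcompeq]
      have hmuA : Antitone mu := by
        intro x y hxy
        exact hA (Fin.succ_le_succ_iff.2 hxy)
      have hmuG : mu ∈ GammaConeBar N k := by
        intro m hm1 hmk
        rw [← htrans m]
        rcases eq_or_lt_of_le hmk with rfl | hlt
        · exact hB1.le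
        · exact gamma_bar_del_nonneg (by omega) (by omega) hG i0 (by omega)
      have h0N' : (0:ℕ) < N := by omega
      set i0' : Fin N := ⟨0, h0N'⟩ with hi0'
      set b : ℝ := mu i0' with hb
      have hIH := ih mu hmuG hmuA
      set d2 : ℝ := esymmSdel N (k-1) mu i0' with hd2
      set d3 : ℝ := esymmSdel N (k-2) mu i0' with hd3
      have hd2nn : 0 ≤ d2 := gamma_bar_del_nonneg (by omega) (by omega) hmuG i0' (le_refl (k-1))
      have hd3nn : 0 ≤ d3 := gamma_bar_del_nonneg (by omega) (by omega) hmuG i0' (by omega)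
      have hbnn : 0 ≤ b := first_nonneg h0N' (by omega) hmuG hmuA
      have hba : b ≤ a := by
        rw [hb, ha, hmu]
        exact hA (by simp [Fin.le_def, hi0, hi0'])
      have hd1split : d1 = d2 + b * d3 := by
        rw [hd1, htrans (k-1), hd2, hd3, hb]
        have := split_I1 (m := k-2) mu i0'
        rw [show k - 2 + 1 = k - 1 by omega] at this
        exact this
      have hskdmu : skd = esymmS N k mu := htrans k
      -- chain : a * d1 ≥ b * d2 ≥ skd / c'
      have hchain : b * d2 ≤ a * d1 := by
        have h1 : b * (d2 + b * d3) ≤ a * (d2 + b * d3) := by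
          apply mul_le_mul_of_nonneg_right hba
          rw [← hd1split]; exact hd1nn
        nlinarith [h1, mul_nonneg (mul_nonneg hbnn hbnn) hd3nn]
      have hIH' : skd ≤ ((N:ℝ) - k + 1) * (a * d1) := by
        rw [hskdmu]
        calc esymmS N k mu ≤ ((N:ℝ) - k + 1) * (b * d2) := hIH
          _ ≤ ((N:ℝ) - k + 1) * (a * d1) := by
              apply mul_le_mul_of_nonneg_left hchain
              have : (k:ℝ) ≤ (N:ℝ) := by exact_mod_cast hN
              linarith
      have had1nn : 0 ≤ a * d1 := by
        have hann : 0 ≤ a := first_nonneg h0N (by omega) hG hA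
        exact mul_nonneg hann hd1nn
      rw [hcast, hsplit]
      nlinarith [hIH', had1nn]

lemma del_ge_del0 {N k : ℕ} (hk2 : 2 ≤ k) (hkn : k ≤ N + 1) (lam : Fin (N+1) → ℝ)
    (hG : lam ∈ GammaConeBar (N+1) k) (hA : Antitone lam) (i : Fin (N+1)) :
    esymmSdel (N+1) (k-1) lam 0 ≤ esymmSdel (N+1) (k-1) lam i := by
  rcases eq_or_ne i 0 with rfl | hi
  · exact le_refl _
  · have h1 : esymmSdel (N+1) (k-1) lam i
        = esymmSdel2 (N+1) (k-1) lam i 0 + lam 0 * esymmSdel2 (N+1) (k-2) lam i 0 := by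
      have := split_I2 (m := k-2) lam i 0 (Ne.symm hi)
      rw [show k - 2 + 1 = k - 1 by omega] at this
      exact this
    have h2 : esymmSdel (N+1) (k-1) lam 0
        = esymmSdel2 (N+1) (k-1) lam 0 i + lam i * esymmSdel2 (N+1) (k-2) lam 0 i := by
      have := split_I2 (m := k-2) lam 0 i hi
      rw [show k - 2 + 1 = k - 1 by omega] at this
      exact this
    rw [esymmSdel2_comm lam i 0, esymmSdel2_comm (m := k-2) lam i 0] at h1
    have hpos : 0 ≤ esymmSdel2 (N+1) (k-2) lam 0 i := by
      obtain ⟨j, rfl⟩ := Fin.eq_succ_of_ne_zero hi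
      rw [← Fin.zero_succAbove j, esymmSdel2_translate]
      have hmuG : (lam ∘ (0 : Fin (N+1)).succAbove) ∈ GammaConeBar N (k-1) := by
        intro m hm1 hmk
        rw [← esymmSdel_translate]
        exact gamma_bar_del_nonneg (by omega) (by omega) hG 0 (by omega)
      exact gamma_bar_del_nonneg (k := k-1) (by omega) (by omega) hmuG j (by omega)
    have hlam : lam i ≤ lam 0 := hA (by simp [Fin.le_def])
    nlinarith [h1, h2, hpos, hlam]

end SixAux

open SixAux

/-- For `1 ≤ k ≤ n` there is `θ = θ(n,k) > 0` (one may take `θ = k/n`) such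
that for every `lam` in the closure of `Γ_k` with decreasing entries and every index `i`,
`lam_1 · S_{k−1}(lam|i) ≥ θ · S_k(lam)`. -/
theorem lam1_mul_esymmSdel_ge (n k : ℕ) (hk1 : 1 ≤ k) (hkn : k ≤ n) :
    ∃ θ : ℝ, 0 < θ ∧
      ∀ lam : Fin n → ℝ, lam ∈ GammaConeBar n k → Antitone lam →
        ∀ i : Fin n,
          lam ⟨0, by omega⟩ * esymmSdel n (k - 1) lam i ≥ θ * esymmS n k lam := by
  refine ⟨1 / ((n:ℝ) - k + 1), ?_, ?_⟩
  · have h1 : (k:ℝ) ≤ (n:ℝ) := by exact_mod_cast hkn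
    have : (0:ℝ) < (n:ℝ) - k + 1 := by linarith
    positivity
  · intro lam hG hA i
    obtain ⟨N, rfl⟩ : ∃ N, n = N + 1 := ⟨n - 1, by omega⟩
    have hcpos : (0:ℝ) < ((N+1:ℕ):ℝ) - k + 1 := by
      have h1 : (k:ℝ) ≤ ((N+1:ℕ):ℝ) := by exact_mod_cast hkn
      linarith
    have hz : (⟨0, by omega⟩ : Fin (N+1)) = 0 := rfl
    rcases eq_or_lt_of_le hk1 with hk1' | hk2
    · -- k = 1
      subst hk1'
      rw [ge_iff_le]
      rw [show (1:ℕ) - 1 = 0 from rfl, esymmSdel_zero, mul_one, esymmS_one]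
      have hsum : ∑ j, lam j ≤ ((N+1:ℕ):ℝ) * lam ⟨0, by omega⟩ := by
        have h2 : ∑ j, lam j ≤ ∑ _j : Fin (N+1), lam ⟨0, by omega⟩ :=
          Finset.sum_le_sum (fun j _ => hA (by simp [Fin.le_def]))
        rw [Finset.sum_const, Finset.card_univ, Fintype.card_fin, nsmul_eq_mul] at h2
        exact h2
      rw [div_mul_eq_mul_div, div_le_iff₀ hcpos]
      push_cast at hsum ⊢
      nlinarith [hsum]
    · -- 2 ≤ k
      have hk2' : 2 ≤ k := hk2
      have hmain := SixAux.main_aux k hk2' (N+1) hkn lam hG hA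
      have hcomp := SixAux.del_ge_del0 hk2' hkn lam hG hA i
      have hann : 0 ≤ lam ⟨0, by omega⟩ := SixAux.first_nonneg (by omega) (by omega) hG hA
      rw [hz] at hmain hann ⊢
      have hfinal : esymmS (N+1) k lam
          ≤ (((N+1:ℕ):ℝ) - k + 1) * (lam 0 * esymmSdel (N+1) (k-1) lam i) := by
        calc esymmS (N+1) k lam
            ≤ (((N+1:ℕ):ℝ) - k + 1) * (lam 0 * esymmSdel (N+1) (k-1) lam 0) := hmain
          _ ≤ (((N+1:ℕ):ℝ) - k + 1) * (lam 0 * esymmSdel (N+1) (k-1) lam i) := by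
              apply mul_le_mul_of_nonneg_left _ hcpos.le
              exact mul_le_mul_of_nonneg_left hcomp hann
      rw [ge_iff_le, div_mul_eq_mul_div, div_le_iff₀ hcpos]
      push_cast at hfinal ⊢
      nlinarith [hfinal]
end

section
/- Let 1 ≤ k ≤ n be integers, let λ = (λ_1,…,λ_n) lie in the closure of Γ_k, and suppose λ_r < 0 for some index r. Then Σ_{i≠r} S_{k−1}(λ|i) λ_i² ≥ (1/n) Σ_{i=1}^n S_{k−1}(λ|i) λ_i². -/
open Finset

section AuxNewton
open Polynomial


lemma splits_derivative (p : ℝ[X]) (hp : p.Splits) :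
    (derivative p).Splits := by
  by_cases h0 : p.natDegree = 0
  · rw [Polynomial.derivative_of_natDegree_zero h0]; exact Polynomial.Splits.zero
  · have hd : (derivative p).natDegree = p.natDegree - 1 := by
      have := Polynomial.degree_derivative_eq p (Nat.pos_of_ne_zero h0)
      exact Polynomial.natDegree_eq_of_degree_eq_some this
    rw [Polynomial.splits_iff_card_roots]
    refine le_antisymm (Polynomial.card_roots' _) ?_
    have h1 : Multiset.card p.roots = p.natDegree := Polynomial.splits_iff_card_roots.mp hp
    have h2 := Polynomial.card_roots_le_derivative p
    omega

lemma splits_iterate_derivative (k : ℕ) (p : ℝ[X]) (hp : p.Splits) :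
    (derivative^[k] p).Splits := by
  induction k with
  | zero => exact hp
  | succ k ih => rw [Function.iterate_succ_apply']; exact splits_derivative _ ih

lemma splits_reverse (p : ℝ[X]) (hp : p.Splits) :
    p.reverse.Splits := by
  rcases eq_or_ne p 0 with rfl | hne
  · simpa using Polynomial.Splits.zero
  have hprod := Polynomial.Splits.eq_prod_roots hp
  rw [hprod, Polynomial.reverse_mul_of_domain]
  apply Polynomial.Splits.mul
  · exact Polynomial.Splits.of_natDegree_le_one
      (le_trans (Polynomial.reverse_natDegree_le _) (by simp))
  · generalize p.roots = s
    induction s using Multiset.induction_on with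
    | empty =>
      have h1 : ((Multiset.map (fun a => X - Polynomial.C a) (0 : Multiset ℝ)).prod) = Polynomial.C 1 := by
        simp
      rw [h1, Polynomial.reverse_C]
      exact Polynomial.Splits.C 1
    | cons a s ih =>
      rw [Multiset.map_cons, Multiset.prod_cons, Polynomial.reverse_mul_of_domain]
      apply Polynomial.Splits.mul _ ih
      exact Polynomial.Splits.of_natDegree_le_one
        (le_trans (Polynomial.reverse_natDegree_le _) (by simp))

lemma natDegree_iterate_derivative_eq (p : ℝ[X]) (k : ℕ) (h : k ≤ p.natDegree) :
    (derivative^[k] p).natDegree = p.natDegree - k := by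
  induction k with
  | zero => simp
  | succ k ih =>
    have hk : k ≤ p.natDegree := by omega
    have h1 : (derivative^[k] p).natDegree = p.natDegree - k := ih hk
    rw [Function.iterate_succ_apply']
    have hpos : 0 < (derivative^[k] p).natDegree := by omega
    have := Polynomial.degree_derivative_eq _ hpos
    have h2 := Polynomial.natDegree_eq_of_degree_eq_some this
    omega

lemma quad_discrim (q : ℝ[X]) (hs : q.Splits) (hd : q.natDegree ≤ 2) :
    4 * (q.coeff 0 * q.coeff 2) ≤ q.coeff 1 ^ 2 := by
  by_cases h2 : q.coeff 2 = 0
  · rw [h2]; nlinarith [sq_nonneg (q.coeff 1)]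
  · have hdeg : q.natDegree = 2 := le_antisymm hd (Polynomial.le_natDegree_of_ne_zero h2)
    have hq0 : q ≠ 0 := fun h => h2 (by simp [h])
    have hcard : Multiset.card q.roots = 2 := by
      rw [Polynomial.splits_iff_card_roots.mp hs, hdeg]
    obtain ⟨x, y, hxy⟩ := Multiset.card_eq_two.mp hcard
    have hq := Polynomial.Splits.eq_prod_roots hs
    rw [hxy] at hq
    have hlc : q.leadingCoeff = q.coeff 2 := by rw [Polynomial.leadingCoeff, hdeg]
    have hprod : (Multiset.map (fun a => X - Polynomial.C a) ({x, y} : Multiset ℝ)).prod =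
        (X - Polynomial.C x) * (X - Polynomial.C y) := by
      simp [Multiset.insert_eq_cons]
    have hq' : q = Polynomial.C (q.coeff 2) * ((X - Polynomial.C x) * (X - Polynomial.C y)) := by
      conv_lhs => rw [hq, hlc, hprod]
    set a := q.coeff 2 with ha
    have hexp : q = Polynomial.C a * X^2 - Polynomial.C a * (Polynomial.C x + Polynomial.C y) * X
        + Polynomial.C a * (Polynomial.C x * Polynomial.C y) := by rw [hq']; ring
    have c0 : q.coeff 0 = a * (x * y) := by rw [hexp]; simp
    have c1 : q.coeff 1 = -(a * (x + y)) := by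
      rw [hexp]; simp
    rw [c0, c1]
    nlinarith [sq_nonneg (a * (x - y))]

lemma desc_one (e : ℕ) : (1+e).descFactorial e = (e+1).factorial := by
  induction e with
  | zero => rfl
  | succ e ih =>
    have h : 1 + (e+1) = (1+e) + 1 := by omega
    rw [h, Nat.succ_descFactorial_succ, ih]
    rw [show (1+e)+1 = e+2 by omega, Nat.factorial_succ (e+1)]

lemma desc_two (e : ℕ) : 2 * ((2+e).descFactorial e) = (e+2).factorial := by
  induction e with
  | zero => rfl
  | succ e ih =>
    have h : 2 + (e+1) = (2+e) + 1 := by omega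
    rw [h, Nat.succ_descFactorial_succ, ← Nat.mul_assoc, Nat.mul_comm 2 ((2+e)+1),
      Nat.mul_assoc, ih, show (2+e)+1 = e+3 by omega, show e+1+2 = e+3 by omega,
      Nat.factorial_succ (e+2)]

noncomputable def SS {n : ℕ} (lam : Fin n → ℝ) (T : Finset (Fin n)) (m : ℕ) : ℝ :=
  ∑ A ∈ T.powersetCard m, ∏ j ∈ A, lam j

variable {n : ℕ} (lam : Fin n → ℝ)

lemma SS_zero (T : Finset (Fin n)) : SS lam T 0 = 1 := by
  simp [SS]

lemma SS_eq_zero {T : Finset (Fin n)} {m : ℕ} (h : T.card < m) : SS lam T m = 0 := by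
  rw [SS, Finset.powersetCard_eq_empty.mpr h, Finset.sum_empty]

lemma SS_insert {T : Finset (Fin n)} {i : Fin n} (hi : i ∉ T) (m : ℕ) :
    SS lam (insert i T) (m+1) = SS lam T (m+1) + lam i * SS lam T m := by
  rw [SS, Finset.powersetCard_succ_insert hi, Finset.sum_union]
  · congr 1
    rw [Finset.sum_image (fun A hA B hB hAB => by
      have hA' : i ∉ A := fun h => hi ((Finset.mem_powersetCard.mp hA).1 h)
      have hB' : i ∉ B := fun h => hi ((Finset.mem_powersetCard.mp hB).1 h)
      rw [← Finset.erase_insert hA', ← Finset.erase_insert hB', hAB])]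
    rw [SS, Finset.mul_sum]
    refine Finset.sum_congr rfl fun A hA => ?_
    have hA' : i ∉ A := fun h => hi ((Finset.mem_powersetCard.mp hA).1 h)
    rw [Finset.prod_insert hA']
  · rw [Finset.disjoint_left]
    intro A hA hA'
    obtain ⟨B, hB, hBA⟩ := Finset.mem_image.mp hA'
    have hiA : i ∉ A := fun h => hi ((Finset.mem_powersetCard.mp hA).1 h)
    exact hiA (hBA ▸ Finset.mem_insert_self i B)

lemma SS_erase {T : Finset (Fin n)} {i : Fin n} (hi : i ∈ T) (m : ℕ) :
    SS lam T (m+1) = SS lam (T.erase i) (m+1) + lam i * SS lam (T.erase i) m := by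
  conv_lhs => rw [← Finset.insert_erase hi]
  exact SS_insert lam (Finset.notMem_erase _ _) m

lemma SS_one (T : Finset (Fin n)) : SS lam T 1 = ∑ i ∈ T, lam i := by
  rw [SS, Finset.powersetCard_one, Finset.sum_map]
  simp

lemma SS_sum_erase (T : Finset (Fin n)) :
    ∀ m : ℕ, ∑ i ∈ T, lam i * SS lam (T.erase i) m = ((m : ℝ)+1) * SS lam T (m+1) := by
  induction T using Finset.induction_on with
  | empty =>
    intro m
    rw [Finset.sum_empty, SS_eq_zero lam (by simp : (∅ : Finset (Fin n)).card < m+1)]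
    ring
  | @insert a T' ha ih =>
    intro m
    rw [Finset.sum_insert ha]
    have h1 : (insert a T').erase a = T' := Finset.erase_insert ha
    cases m with
    | zero =>
      simp only [SS_zero, mul_one, h1]
      rw [SS_one, Finset.sum_insert ha]
      push_cast; ring
    | succ m' =>
      have hstep : ∀ i ∈ T', lam i * SS lam ((insert a T').erase i) (m'+1) =
          lam i * SS lam (T'.erase i) (m'+1) + lam a * (lam i * SS lam (T'.erase i) m') := by
        intro i hi
        have hai : a ≠ i := fun h => ha (h ▸ hi)
        rw [Finset.erase_insert_of_ne hai, SS_insert lam (fun h => ha (Finset.mem_of_mem_erase h)) m']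
        ring
      rw [Finset.sum_congr rfl hstep, Finset.sum_add_distrib, ← Finset.mul_sum, ih (m'+1), ih m',
        h1, SS_insert lam ha (m'+1)]
      push_cast; ring

lemma SS_erase_nonneg_of_nonpos {T : Finset (Fin n)} {i : Fin n} (hi : i ∈ T) (hneg : lam i ≤ 0)
    {k : ℕ} (H : ∀ m, 1 ≤ m → m ≤ k → 0 ≤ SS lam T m) :
    ∀ m, m ≤ k → 0 ≤ SS lam (T.erase i) m := by
  intro m
  induction m with
  | zero => intro _; rw [SS_zero]; norm_num
  | succ m' ih =>
    intro hm
    have h1 := SS_erase lam hi m'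
    have h2 := H (m'+1) (by omega) hm
    have h3 := ih (by omega)
    nlinarith [mul_nonneg (neg_nonneg.mpr hneg) h3]

noncomputable def PP {n : ℕ} (lam : Fin n → ℝ) (T : Finset (Fin n)) : ℝ[X] :=
  ∏ j ∈ T, (X + Polynomial.C (lam j))

lemma monic_PP (T : Finset (Fin n)) : (PP lam T).Monic :=
  Polynomial.monic_prod_of_monic _ _ fun j _ => Polynomial.monic_X_add_C _

lemma natDegree_PP (T : Finset (Fin n)) : (PP lam T).natDegree = T.card := by
  rw [PP, Polynomial.natDegree_prod_of_monic _ _ (fun j _ => Polynomial.monic_X_add_C _)]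
  simp [Polynomial.natDegree_X_add_C]

lemma coeff_PP (T : Finset (Fin n)) {m : ℕ} (h : m ≤ T.card) :
    (PP lam T).coeff (T.card - m) = SS lam T m := by
  rw [PP, Finset.prod_X_add_C_coeff _ _ (Nat.sub_le _ _), Nat.sub_sub_self h, SS]

lemma splits_PP (T : Finset (Fin n)) : (PP lam T).Splits :=
  Polynomial.Splits.prod fun j _ =>
    Polynomial.Splits.of_natDegree_le_one (le_of_eq (Polynomial.natDegree_X_add_C _))

lemma SS_newton (T : Finset (Fin n)) (jj e : ℕ) (hcard : T.card = jj + 2 + e) :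
    ((jj:ℝ)+2) * ((e:ℝ)+2) * (SS lam T jj * SS lam T (jj+2)) ≤
      ((jj:ℝ)+1) * ((e:ℝ)+1) * SS lam T (jj+1)^2 := by
  set p := PP lam T with hp
  have hdp : p.natDegree = jj + 2 + e := by rw [hp, natDegree_PP, hcard]
  set g := derivative^[e] p with hg
  have hdg : g.natDegree = jj + 2 := by
    rw [hg, natDegree_iterate_derivative_eq p e (by omega), hdp]; omega
  have hsg : g.Splits := splits_iterate_derivative e p (splits_PP lam T)
  have hcoe : ∀ t, t ≤ 2 → g.coeff t = ((t+e).descFactorial e : ℝ) * SS lam T (jj+2-t) := by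
    intro t ht
    rw [hg, Polynomial.coeff_iterate_derivative, nsmul_eq_mul]
    congr 1
    have h1 : t + e = T.card - (jj+2-t) := by omega
    rw [h1, coeff_PP lam T (by omega)]
  set h := g.reverse with hrev
  have hsh : h.Splits := splits_reverse g hsg
  have hdh : h.natDegree ≤ jj + 2 := hdg ▸ Polynomial.reverse_natDegree_le g
  have hcoh : ∀ s, s ≤ jj + 2 → h.coeff s = g.coeff (jj+2-s) := by
    intro s hs
    rw [hrev, Polynomial.coeff_reverse, hdg, Polynomial.revAt_le hs]
  set q := derivative^[jj] h with hq
  have hsq : q.Splits := splits_iterate_derivative jj h hsh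
  have hdq : q.natDegree ≤ 2 := by
    have h1 := Polynomial.natDegree_iterate_derivative h jj
    rw [← hq] at h1
    omega
  have hquad := quad_discrim q hsq hdq
  have hq0 : q.coeff 0 = ((jj).descFactorial jj : ℝ) * (((2+e).descFactorial e : ℝ) * SS lam T jj) := by
    rw [hq, Polynomial.coeff_iterate_derivative, nsmul_eq_mul, Nat.zero_add,
      hcoh jj (by omega), show jj+2-jj = 2 by omega, hcoe 2 (by omega),
      show jj+2-2 = jj by omega]
  have hq1 : q.coeff 1 = ((1+jj).descFactorial jj : ℝ) * (((1+e).descFactorial e : ℝ) * SS lam T (jj+1)) := by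
    rw [hq, Polynomial.coeff_iterate_derivative, nsmul_eq_mul,
      hcoh (1+jj) (by omega), show jj+2-(1+jj) = 1 by omega, hcoe 1 (by omega),
      show jj+2-1 = jj+1 by omega]
  have hq2 : q.coeff 2 = ((2+jj).descFactorial jj : ℝ) * (((e).descFactorial e : ℝ) * SS lam T (jj+2)) := by
    rw [hq, Polynomial.coeff_iterate_derivative, nsmul_eq_mul,
      hcoh (2+jj) (by omega), show jj+2-(2+jj) = 0 by omega, hcoe 0 (by omega),
      show jj+2-0 = jj+2 by omega]
    norm_num
  rw [hq0, hq1, hq2] at hquad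
  -- introduce factorial names
  set S0 := SS lam T jj
  set S1 := SS lam T (jj+1)
  set S2 := SS lam T (jj+2)
  have hD0 : ((jj).descFactorial jj : ℝ) = (jj.factorial : ℝ) := by
    rw [Nat.descFactorial_self]
  have hD1 : ((1+jj).descFactorial jj : ℝ) = ((jj+1).factorial : ℝ) := by
    rw [desc_one jj]
  have hD2 : 2 * ((2+jj).descFactorial jj : ℝ) = ((jj+2).factorial : ℝ) := by
    rw [← desc_two jj]; push_cast; ring
  have hE0 : ((e).descFactorial e : ℝ) = (e.factorial : ℝ) := by
    rw [Nat.descFactorial_self]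
  have hE1 : ((1+e).descFactorial e : ℝ) = ((e+1).factorial : ℝ) := by
    rw [desc_one e]
  have hE2 : 2 * ((2+e).descFactorial e : ℝ) = ((e+2).factorial : ℝ) := by
    rw [← desc_two e]; push_cast; ring
  have keyF : ((jj+2).factorial : ℝ) * ((e+2).factorial : ℝ) * (jj.factorial : ℝ) * (e.factorial : ℝ) * (S0 * S2)
      ≤ (((jj+1).factorial : ℝ) * ((e+1).factorial : ℝ))^2 * S1^2 := by
    calc ((jj+2).factorial : ℝ) * ((e+2).factorial : ℝ) * (jj.factorial : ℝ) * (e.factorial : ℝ) * (S0 * S2)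
        = 4 * (((jj).descFactorial jj : ℝ) * (((2+e).descFactorial e : ℝ) * S0) *
            (((2+jj).descFactorial jj : ℝ) * (((e).descFactorial e : ℝ) * S2))) := by
          rw [← hD2, ← hE2, hD0, hE0]; ring
      _ ≤ (((1+jj).descFactorial jj : ℝ) * (((1+e).descFactorial e : ℝ) * S1))^2 := hquad
      _ = (((jj+1).factorial : ℝ) * ((e+1).factorial : ℝ))^2 * S1^2 := by
          rw [hD1, hE1]; ring
  have f1 : ((jj+2).factorial : ℝ) = ((jj:ℝ)+2) * ((jj+1).factorial : ℝ) := by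
    rw [Nat.factorial_succ (jj+1)]; push_cast; ring
  have f2 : ((jj+1).factorial : ℝ) = ((jj:ℝ)+1) * (jj.factorial : ℝ) := by
    rw [Nat.factorial_succ jj]; push_cast; ring
  have f3 : ((e+2).factorial : ℝ) = ((e:ℝ)+2) * ((e+1).factorial : ℝ) := by
    rw [Nat.factorial_succ (e+1)]; push_cast; ring
  have f4 : ((e+1).factorial : ℝ) = ((e:ℝ)+1) * (e.factorial : ℝ) := by
    rw [Nat.factorial_succ e]; push_cast; ring
  have hwpos : (0:ℝ) < ((jj:ℝ)+1) * ((e:ℝ)+1) * ((jj.factorial : ℝ) * (e.factorial : ℝ))^2 := by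
    have := Nat.factorial_pos jj
    have := Nat.factorial_pos e
    positivity
  refine le_of_mul_le_mul_right ?_ hwpos
  calc ((jj:ℝ)+2) * ((e:ℝ)+2) * (S0 * S2) * (((jj:ℝ)+1) * ((e:ℝ)+1) * ((jj.factorial : ℝ) * (e.factorial : ℝ))^2)
      = ((jj+2).factorial : ℝ) * ((e+2).factorial : ℝ) * (jj.factorial : ℝ) * (e.factorial : ℝ) * (S0 * S2) := by
        rw [f1, f3, f2, f4]; ring
    _ ≤ (((jj+1).factorial : ℝ) * ((e+1).factorial : ℝ))^2 * S1^2 := keyF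
    _ = ((jj:ℝ)+1) * ((e:ℝ)+1) * S1^2 * (((jj:ℝ)+1) * ((e:ℝ)+1) * ((jj.factorial : ℝ) * (e.factorial : ℝ))^2) := by
        rw [f2, f4]; ring

lemma SS_erase_nonneg (k : ℕ) :
    ∀ (T : Finset (Fin n)) (i : Fin n), i ∈ T →
      (∀ m, 1 ≤ m → m ≤ k → 0 ≤ SS lam T m) →
      ∀ m, 1 ≤ m → m + 1 ≤ k → 0 ≤ SS lam (T.erase i) m := by
  induction k with
  | zero => intro T i hi H m h1 h2; omega
  | succ k ih =>
    intro T i hi H m h1 hm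
    rcases le_or_gt (lam i) 0 with hneg | hpos
    · exact SS_erase_nonneg_of_nonpos lam hi hneg H m (by omega)
    by_cases hmk : m + 1 ≤ k
    · exact ih T i hi (fun m' a b => H m' a (by omega)) m h1 hmk
    have hmk' : m = k := by omega
    by_contra hA
    push_neg at hA
    obtain ⟨m'', rfl⟩ : ∃ m'', m = m'' + 1 := ⟨m - 1, by omega⟩
    set t := lam i with ht
    set A := SS lam (T.erase i) (m''+1) with hAdef
    set B := SS lam (T.erase i) m'' with hBdef
    set C := SS lam (T.erase i) (m''+2) with hCdef
    have hB : 0 ≤ B := by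
      rcases Nat.eq_zero_or_pos m'' with h0 | h0
      · rw [hBdef, h0, SS_zero]; norm_num
      · exact ih T i hi (fun m' a b => H m' a (by omega)) m'' (by omega) (by omega)
    have hrec1 := SS_erase lam hi m''
    have hrec2 := SS_erase lam hi (m''+1)
    have hTm : 0 ≤ SS lam T (m''+1) := H (m''+1) (by omega) (by omega)
    have hTm1 : 0 ≤ SS lam T (m''+2) := H (m''+2) (by omega) (by omega)
    have h5 : t * B ≥ -A := by rw [hrec1] at hTm; linarith
    have h6 : C ≥ -(t * A) := by rw [hrec2] at hTm1; linarith
    have hBpos : 0 < B := by nlinarith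
    have hCpos : 0 < C := by nlinarith
    rcases lt_or_ge (T.erase i).card (m''+2) with hc | hc
    · rw [hCdef, SS_eq_zero lam hc] at hCpos; linarith
    have hcard : (T.erase i).card = m'' + 2 + ((T.erase i).card - m'' - 2) := by omega
    have hnewton := SS_newton lam (T.erase i) m'' ((T.erase i).card - m'' - 2) hcard
    set e := (T.erase i).card - m'' - 2 with he
    rw [← hAdef, ← hBdef, ← hCdef] at hnewton
    have h7 : A^2 ≤ B * C := by
      have h7a : B * (-(t*A)) ≤ B * C := mul_le_mul_of_nonneg_left h6 hBpos.le
      have h7b : (-A) * (-A) ≤ (t*B) * (-A) := mul_le_mul_of_nonneg_right h5 (by linarith)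
      calc A^2 = (-A) * (-A) := by ring
        _ ≤ (t*B) * (-A) := h7b
        _ = B * (-(t*A)) := by ring
        _ ≤ B * C := h7a
    have hA2 : 0 < A^2 := by nlinarith
    have h8 : ((m'':ℝ)+2)*((e:ℝ)+2)*(A^2) ≤ ((m'':ℝ)+2)*((e:ℝ)+2)*(B*C) := by
      have : (0:ℝ) ≤ ((m'':ℝ)+2)*((e:ℝ)+2) := by positivity
      exact mul_le_mul_of_nonneg_left h7 this
    nlinarith [h8, hnewton, hA2, mul_nonneg (Nat.cast_nonneg (α := ℝ) m'') hA2.le,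
      mul_nonneg (Nat.cast_nonneg (α := ℝ) e) hA2.le]

lemma esymmSdel_eq_SS {n : ℕ} (m : ℕ) (lam : Fin n → ℝ) (i : Fin n) :
    esymmSdel n m lam i = SS lam (Finset.univ.erase i) m := rfl


end AuxNewton

/-- For `1 ≤ k ≤ n`, `lam` in the closure of `Γ_k` and an index `r` with
`lam_r < 0`, one has `Σ_{i≠r} S_{k−1}(lam|i)·lam_i² ≥ (1/n)·Σ_i S_{k−1}(lam|i)·lam_i²`. -/
theorem sum_erase_ge_inv_n_sum (n k : ℕ) (hk1 : 1 ≤ k) (hkn : k ≤ n)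
    (lam : Fin n → ℝ) (hlam : lam ∈ GammaConeBar n k) (r : Fin n) (hr : lam r < 0) :
    ∑ i ∈ Finset.univ.erase r, esymmSdel n (k - 1) lam i * lam i ^ 2 ≥
      (1 / (n : ℝ)) * ∑ i, esymmSdel n (k - 1) lam i * lam i ^ 2 := by
  classical
  have hn : 0 < n := by omega
  have H : ∀ m, 1 ≤ m → m ≤ k → 0 ≤ SS lam Finset.univ m := fun m h1 h2 => hlam m h1 h2
  obtain ⟨k', rfl⟩ : ∃ k', k = k' + 1 := ⟨k - 1, by omega⟩
  simp only [Nat.add_sub_cancel, esymmSdel_eq_SS]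
  set S : Fin n → ℝ := fun i => SS lam (Finset.univ.erase i) k' with hSdef
  have Hrm : ∀ m, m ≤ k' + 1 → 0 ≤ SS lam (Finset.univ.erase r) m :=
    SS_erase_nonneg_of_nonpos lam (Finset.mem_univ r) hr.le H
  have hSr : 0 ≤ S r := Hrm k' (by omega)
  have F1 : ∀ i, 0 ≤ S i := by
    intro i
    rcases le_or_gt (lam i) 0 with h | h
    · exact SS_erase_nonneg_of_nonpos lam (Finset.mem_univ i) h H k' (by omega)
    · rcases Nat.eq_zero_or_pos k' with h0 | h0
      · rw [hSdef]; simp only [h0, SS_zero]; norm_num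
      · exact SS_erase_nonneg lam (k' + 1) Finset.univ i (Finset.mem_univ i) H k' h0 le_rfl
  have F2 : ∀ i, 0 < lam i → S i ≤ S r := by
    intro i hpos
    have hir : i ≠ r := fun h => by rw [h] at hpos; linarith
    rcases Nat.eq_zero_or_pos k' with h0 | h0
    · rw [hSdef]; simp only [h0, SS_zero]; exact le_rfl
    obtain ⟨k'', rfl⟩ : ∃ k'', k' = k'' + 1 := ⟨k' - 1, by omega⟩
    have hiU : i ∈ Finset.univ.erase r := Finset.mem_erase.mpr ⟨hir, Finset.mem_univ i⟩
    have hrU : r ∈ Finset.univ.erase i := Finset.mem_erase.mpr ⟨fun h => hir h.symm, Finset.mem_univ r⟩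
    have e1 := SS_erase lam hiU k''
    have e2 := SS_erase lam hrU k''
    have hcomm : (Finset.univ.erase i).erase r = (Finset.univ.erase r).erase i := by
      ext x; simp only [Finset.mem_erase, Finset.mem_univ, and_true]; tauto
    rw [hcomm] at e2
    have hE : 0 ≤ SS lam ((Finset.univ.erase r).erase i) k'' := by
      rcases Nat.eq_zero_or_pos k'' with h0' | h0'
      · rw [h0', SS_zero]; norm_num
      · exact SS_erase_nonneg lam (k'' + 2) (Finset.univ.erase r) i hiU
          (fun m a b => Hrm m (by omega)) k'' h0' (by omega)
    have hfac : 0 ≤ (lam i - lam r) * SS lam ((Finset.univ.erase r).erase i) k'' :=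
      mul_nonneg (by linarith) hE
    show SS lam (Finset.univ.erase i) (k'' + 1) ≤ SS lam (Finset.univ.erase r) (k'' + 1)
    nlinarith [e1, e2, hfac]
  -- the sum identity
  have sumid := SS_sum_erase lam Finset.univ k'
  have hSk : 0 ≤ SS lam Finset.univ (k' + 1) := H (k' + 1) (by omega) le_rfl
  have htot : 0 ≤ ∑ i, lam i * S i := by
    rw [hSdef]; rw [sumid]; positivity
  set P : Finset (Fin n) := Finset.univ.filter (fun i => 0 < lam i) with hPdef
  have hsplit := Finset.sum_filter_add_sum_filter_not Finset.univ (fun i => 0 < lam i)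
    (fun i => lam i * S i)
  have hrmem : r ∈ Finset.univ.filter (fun i => ¬ 0 < lam i) := by
    simp only [Finset.mem_filter, Finset.mem_univ, true_and, not_lt]
    exact hr.le
  have hnotP : ∑ i ∈ Finset.univ.filter (fun i => ¬ 0 < lam i), lam i * S i ≤ lam r * S r := by
    rw [← Finset.add_sum_erase _ _ hrmem]
    have : ∑ i ∈ (Finset.univ.filter (fun i => ¬ 0 < lam i)).erase r, lam i * S i ≤ 0 := by
      apply Finset.sum_nonpos
      intro i hi
      have h1 : ¬ 0 < lam i := (Finset.mem_filter.mp (Finset.mem_of_mem_erase hi)).2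
      exact mul_nonpos_of_nonpos_of_nonneg (not_lt.mp h1) (F1 i)
    linarith
  have hP : -(lam r * S r) ≤ ∑ i ∈ P, lam i * S i := by
    have := hsplit
    rw [hPdef]; linarith
  have hPnn : 0 ≤ -(lam r * S r) := by nlinarith
  -- Cauchy-Schwarz
  have hCS := Finset.sum_mul_sq_le_sq_mul_sq P (fun i => Real.sqrt (S i))
    (fun i => lam i * Real.sqrt (S i))
  have hc1 : ∑ i ∈ P, Real.sqrt (S i) * (lam i * Real.sqrt (S i)) = ∑ i ∈ P, lam i * S i := by
    refine Finset.sum_congr rfl fun i _ => ?_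
    rw [show Real.sqrt (S i) * (lam i * Real.sqrt (S i))
        = lam i * (Real.sqrt (S i) * Real.sqrt (S i)) by ring, Real.mul_self_sqrt (F1 i)]
  have hc2 : ∑ i ∈ P, Real.sqrt (S i) ^ 2 = ∑ i ∈ P, S i :=
    Finset.sum_congr rfl fun i _ => Real.sq_sqrt (F1 i)
  have hc3 : ∑ i ∈ P, (lam i * Real.sqrt (S i)) ^ 2 = ∑ i ∈ P, S i * lam i ^ 2 := by
    refine Finset.sum_congr rfl fun i _ => ?_
    rw [mul_pow, Real.sq_sqrt (F1 i)]; ring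
  rw [hc1, hc2, hc3] at hCS
  -- bounds on the two factors
  have hcardP : (P.card : ℝ) ≤ (n : ℝ) - 1 := by
    have hsub : P ⊆ Finset.univ.erase r := by
      intro i hi
      exact Finset.mem_erase.mpr ⟨fun h => by
        have := (Finset.mem_filter.mp hi).2; rw [h] at this; linarith, Finset.mem_univ i⟩
    have h1 : P.card ≤ n - 1 := by
      have := Finset.card_le_card hsub
      rwa [Finset.card_erase_of_mem (Finset.mem_univ r), Finset.card_univ, Fintype.card_fin] at this
    have h2 : (P.card : ℝ) ≤ ((n - 1 : ℕ) : ℝ) := Nat.cast_le.mpr h1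
    rwa [Nat.cast_sub (by omega), Nat.cast_one] at h2
  have hsum1 : ∑ i ∈ P, S i ≤ ((n : ℝ) - 1) * S r := by
    calc ∑ i ∈ P, S i ≤ P.card • S r := Finset.sum_le_card_nsmul P _ (S r)
          (fun i hi => F2 i (Finset.mem_filter.mp hi).2)
      _ = (P.card : ℝ) * S r := nsmul_eq_mul _ _
      _ ≤ ((n : ℝ) - 1) * S r := mul_le_mul_of_nonneg_right hcardP hSr
  have hsum1' : 0 ≤ ∑ i ∈ P, S i := Finset.sum_nonneg fun i _ => F1 i
  set W := ∑ i ∈ Finset.univ.erase r, S i * lam i ^ 2 with hWdef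
  have hW0 : 0 ≤ W := Finset.sum_nonneg fun i _ => mul_nonneg (F1 i) (sq_nonneg _)
  have hsum2 : ∑ i ∈ P, S i * lam i ^ 2 ≤ W := by
    apply Finset.sum_le_sum_of_subset_of_nonneg
    · intro i hi
      exact Finset.mem_erase.mpr ⟨fun h => by
        have := (Finset.mem_filter.mp hi).2; rw [h] at this; linarith, Finset.mem_univ i⟩
    · exact fun i _ _ => mul_nonneg (F1 i) (sq_nonneg _)
  have hsum2' : 0 ≤ ∑ i ∈ P, S i * lam i ^ 2 :=
    Finset.sum_nonneg fun i _ => mul_nonneg (F1 i) (sq_nonneg _)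
  -- combine
  have keymain : (lam r)^2 * (S r)^2 ≤ (((n : ℝ) - 1) * S r) * W := by
    calc (lam r)^2 * (S r)^2 = (-(lam r * S r))^2 := by ring
      _ ≤ (∑ i ∈ P, lam i * S i)^2 := by
          apply pow_le_pow_left₀ hPnn hP
      _ ≤ (∑ i ∈ P, S i) * (∑ i ∈ P, S i * lam i ^ 2) := hCS
      _ ≤ (((n : ℝ) - 1) * S r) * W := by
          apply mul_le_mul hsum1 hsum2 hsum2' (by nlinarith)
  -- finish
  rw [← Finset.add_sum_erase _ _ (Finset.mem_univ r)]
  rw [ge_iff_le, one_div, inv_mul_le_iff₀ (by exact_mod_cast hn)]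
  rcases eq_or_lt_of_le hSr with hS0 | hSpos
  · have : S r * lam r ^ 2 = 0 := by rw [← hS0]; ring
    rw [this]
    have hn1 : (1:ℝ) ≤ (n:ℝ) := by exact_mod_cast hn
    nlinarith [mul_le_mul_of_nonneg_right hn1 hW0]
  · have hdiv : (lam r)^2 * S r ≤ ((n : ℝ) - 1) * W := by
      have h1 : ((lam r)^2 * S r) * S r ≤ (((n : ℝ) - 1) * W) * S r := by nlinarith [keymain]
      exact le_of_mul_le_mul_right h1 hSpos
    have hn1 : (1:ℝ) ≤ (n:ℝ) := by exact_mod_cast hn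
    linarith [hdiv, hW0]
end

section
/- Let 1 ≤ k < n be integers and let λ = (λ_1,…,λ_n) ∈ Γ_k. Then Σ_{i=1}^n S_{k−1}(λ|i) λ_i² ≥ (k/n) S_1(λ) S_k(λ). Equivalently, since Σ_{i=1}^n S_{k−1}(λ|i) λ_i² = S_1(λ) S_k(λ) − (k+1) S_{k+1}(λ), one has (k+1) S_{k+1}(λ) ≤ ((n−k)/n) S_1(λ) S_k(λ). -/
open Finset

section NewtonAux
open Polynomial

def RR (p : ℝ[X]) : Prop := p ≠ 0 ∧ Multiset.card p.roots = p.natDegree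


lemma RR_derivative {p : ℝ[X]} (hp : RR p) (hd : p.natDegree ≠ 0) :
    RR (derivative p) ∧ (derivative p).natDegree = p.natDegree - 1 := by
  have h1 : (derivative p).natDegree < p.natDegree := natDegree_derivative_lt hd
  have hne : derivative p ≠ 0 := fun h => hd (natDegree_eq_zero_of_derivative_eq_zero h)
  have h2 : Multiset.card (derivative p).roots ≤ (derivative p).natDegree := card_roots' _
  have h3 : Multiset.card p.roots ≤ Multiset.card (derivative p).roots + 1 :=
    card_roots_le_derivative p
  have hc := hp.2
  exact ⟨⟨hne, by omega⟩, by omega⟩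

lemma RR_iterate {p : ℝ[X]} (hp : RR p) (j : ℕ) (hj : j ≤ p.natDegree) :
    RR (derivative^[j] p) ∧ (derivative^[j] p).natDegree = p.natDegree - j := by
  induction j with
  | zero => simpa using hp
  | succ i ih =>
    obtain ⟨h1, h2⟩ := ih (by omega)
    rw [Function.iterate_succ_apply']
    have := RR_derivative h1 (by omega)
    rw [h2] at this
    exact ⟨this.1, by omega⟩

lemma quad_disc {p : ℝ[X]} (hp : RR p) (h2 : p.natDegree = 2) :
    4 * p.coeff 2 * p.coeff 0 ≤ (p.coeff 1)^2 := by
  have hroots : Multiset.card p.roots = 2 := hp.2.trans h2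
  obtain ⟨x, hx⟩ : ∃ x, x ∈ p.roots := Multiset.card_pos_iff_exists_mem.mp (by omega)
  have hxr : p.IsRoot x := (mem_roots hp.1).mp hx
  have heval : p.coeff 0 + p.coeff 1 * x + p.coeff 2 * x ^ 2 = 0 := by
    have h := eval_eq_sum_range (p := p) x
    rw [h2] at h
    rw [IsRoot, h] at hxr
    simp [Finset.sum_range_succ] at hxr
    linarith [hxr]
  have key : p.coeff 1 ^ 2 - 4 * p.coeff 2 * p.coeff 0
      = (2 * p.coeff 2 * x + p.coeff 1) ^ 2
        - 4 * p.coeff 2 * (p.coeff 0 + p.coeff 1 * x + p.coeff 2 * x ^ 2) := by ring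
  rw [heval, mul_zero, sub_zero] at key
  nlinarith [sq_nonneg (2 * p.coeff 2 * x + p.coeff 1), key]


lemma reverse_X_sub_C (a : ℝ) (ha : a ≠ 0) : reverse (X - C a) = C (-a) * (X - C a⁻¹) := by
  have h1 : (X - C a).natDegree = 1 := natDegree_X_sub_C a
  ext n
  rw [coeff_reverse, h1]
  match n with
  | 0 => simp [revAt_le]; exact (mul_inv_cancel₀ ha).symm
  | 1 => simp [revAt_le, ha]
  | (k+2) =>
    rw [revAt_eq_self_of_lt (by omega)]
    simp [coeff_X, coeff_C]

lemma reverse_multiset_prod (s : Multiset ℝ) (hs : ∀ r ∈ s, r ≠ 0) :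
    reverse ((s.map (fun r => X - C r)).prod)
      = C ((s.map (fun r => -r)).prod) * ((s.map (fun r => X - C r⁻¹)).prod) := by
  induction s using Multiset.induction with
  | empty => simp [reverse, reflect_one]
  | cons a s ih =>
    have ha : a ≠ 0 := hs a (Multiset.mem_cons_self a s)
    simp only [Multiset.map_cons, Multiset.prod_cons]
    rw [reverse_mul_of_domain, ih (fun r hr => hs r (Multiset.mem_cons_of_mem hr)),
      reverse_X_sub_C a ha, map_mul]
    ring


lemma RR_reverse {p : ℝ[X]} (hp : RR p) (h0 : p.coeff 0 ≠ 0) :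
    RR (reverse p) ∧ (reverse p).natDegree = p.natDegree := by
  have hlc : p.leadingCoeff ≠ 0 := leadingCoeff_ne_zero.mpr hp.1
  have hfac := C_leadingCoeff_mul_prod_multiset_X_sub_C hp.2
  have hroots0 : ∀ r ∈ p.roots, r ≠ 0 := by
    intro r hr h
    have : p.IsRoot r := (mem_roots hp.1).mp hr
    rw [h, IsRoot, ← coeff_zero_eq_eval_zero] at this
    exact h0 this
  have hrev : reverse p = C (p.leadingCoeff * (p.roots.map (fun r => -r)).prod) *
      ((p.roots.map (fun r => (X : ℝ[X]) - C r⁻¹)).prod) := by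
    conv_lhs => rw [← hfac]
    rw [reverse_mul_of_domain, reverse_C, reverse_multiset_prod _ hroots0, map_mul]
    ring
  have hc : p.leadingCoeff * (p.roots.map (fun r => -r)).prod ≠ 0 := by
    refine mul_ne_zero hlc ?_
    refine Multiset.prod_ne_zero ?_
    intro h
    rw [Multiset.mem_map] at h
    obtain ⟨r, hr, hr0⟩ := h
    exact hroots0 r hr (neg_eq_zero.mp hr0)
  have hmonic : ((p.roots.map (fun r => (X : ℝ[X]) - C r⁻¹)).prod).Monic :=
    monic_multiset_prod_of_monic _ _ (fun r _ => monic_X_sub_C _)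
  have hdeg : ((p.roots.map (fun r => (X : ℝ[X]) - C r⁻¹)).prod).natDegree
      = Multiset.card p.roots := by
    rw [natDegree_multiset_prod_of_monic]
    · simp [Multiset.map_map, Function.comp, natDegree_X_sub_C]
    · intro f hf
      obtain ⟨r, _, rfl⟩ := Multiset.mem_map.mp hf
      exact monic_X_sub_C _
  have hne : reverse p ≠ 0 := by
    rw [hrev]
    exact mul_ne_zero (by simpa using hc) hmonic.ne_zero
  have hd2 : (reverse p).natDegree = p.natDegree := by
    rw [hrev, natDegree_C_mul hc, hdeg, hp.2]
  refine ⟨⟨hne, ?_⟩, hd2⟩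
  rw [hd2, hrev, roots_C_mul _ hc,
    show (Multiset.map (fun r => (X : ℝ[X]) - C r⁻¹) p.roots)
        = Multiset.map (fun a => (X : ℝ[X]) - C a) (p.roots.map (fun r => r⁻¹)) by
      rw [Multiset.map_map]; rfl,
    roots_multiset_prod_X_sub_C, Multiset.card_map, hp.2]


lemma esymmS_prod_coeff (n m : ℕ) (hm : m ≤ n) (lam : Fin n → ℝ) :
    (∏ i : Fin n, (X + C (lam i))).coeff (n - m) = esymmS n m lam := by
  have hcard : #(Finset.univ : Finset (Fin n)) = n := by simp
  have h : (n - m) ≤ #(Finset.univ : Finset (Fin n)) := by rw [hcard]; omega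
  rw [Finset.prod_X_add_C_coeff Finset.univ lam h, esymmS]
  have h2 : #(Finset.univ : Finset (Fin n)) - (n - m) = m := by rw [hcard]; omega
  rw [h2]


lemma RR_prodP (n : ℕ) (lam : Fin n → ℝ) :
    RR (∏ i : Fin n, (X + C (lam i))) ∧ (∏ i : Fin n, (X + C (lam i))).natDegree = n := by
  have hmon : (∏ i : Fin n, (X + C (lam i))).Monic :=
    monic_prod_of_monic _ _ (fun i _ => monic_X_add_C (lam i))
  have hdeg : (∏ i : Fin n, (X + C (lam i))).natDegree = n := by
    rw [natDegree_prod_of_monic _ _ (fun i _ => monic_X_add_C (lam i))]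
    simp [natDegree_X_add_C]
  have key : (∏ i : Fin n, (X + C (lam i)))
      = (Multiset.map (fun r => X - C r) ((Finset.univ.val.map lam).map (fun x => -x))).prod := by
    rw [Multiset.map_map, Finset.prod]
    apply congrArg
    rw [Multiset.map_map]
    apply Multiset.map_congr rfl
    intro i _
    simp [Function.comp, sub_neg_eq_add]
  refine ⟨⟨hmon.ne_zero, ?_⟩, hdeg⟩
  rw [hdeg, key, roots_multiset_prod_X_sub_C]
  simp

lemma descFactorial_pos' {n k : ℕ} (h : k ≤ n) : 0 < n.descFactorial k :=
  Nat.pos_of_ne_zero (fun h0 => absurd (Nat.descFactorial_eq_zero_iff_lt.mp h0) (by omega))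

lemma descFactorial_succ_self (a : ℕ) : (a + 1).descFactorial a = (a + 1).factorial := by
  have h := Nat.descFactorial_succ (a + 1) a
  rw [Nat.descFactorial_self, show a + 1 - a = 1 by omega] at h
  omega

lemma descFactorial_two (a : ℕ) : (a + 2).descFactorial a * 2 = (a + 2).factorial := by
  have h1 := Nat.descFactorial_succ (a + 2) (a + 1)
  have h2 := Nat.descFactorial_succ (a + 2) a
  rw [Nat.descFactorial_self, show a + 2 - (a + 1) = 1 by omega] at h1
  rw [show a + 2 - a = 2 by omega] at h2
  omega

lemma newton_nat_ident (a b : ℕ) :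
    ((a+1).factorial * (b+1).factorial)^2 * ((a+b+2).choose (a+1))^2
      = (4 * (a.factorial * ((a+2).descFactorial a)) * (b.factorial * ((b+2).descFactorial b)))
        * ((a+b+2).choose a * (a+b+2).choose (a+2)) := by
  set n := a + b + 2 with hn
  have i1 : n.choose a * a.factorial * (b+2).factorial = n.factorial := by
    have h := Nat.choose_mul_factorial_mul_factorial (show a ≤ n by omega)
    rwa [show n - a = b + 2 by omega] at h
  have i2 : n.choose (a+1) * (a+1).factorial * (b+1).factorial = n.factorial := by
    have h := Nat.choose_mul_factorial_mul_factorial (show a + 1 ≤ n by omega)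
    rwa [show n - (a+1) = b + 1 by omega] at h
  have i3 : n.choose (a+2) * (a+2).factorial * b.factorial = n.factorial := by
    have h := Nat.choose_mul_factorial_mul_factorial (show a + 2 ≤ n by omega)
    rwa [show n - (a+2) = b by omega] at h
  have e2 := descFactorial_two a
  have d2 := descFactorial_two b
  calc ((a+1).factorial * (b+1).factorial)^2 * (n.choose (a+1))^2
      = (n.choose (a+1) * (a+1).factorial * (b+1).factorial)^2 := by ring
    _ = n.factorial * n.factorial := by rw [i2]; ring
    _ = (n.choose a * a.factorial * (b+2).factorial) *
        (n.choose (a+2) * (a+2).factorial * b.factorial) := by rw [i1, i3]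
    _ = (n.choose a * a.factorial * ((b+2).descFactorial b * 2)) *
        (n.choose (a+2) * ((a+2).descFactorial a * 2) * b.factorial) := by rw [e2, d2]
    _ = (4 * (a.factorial * ((a+2).descFactorial a)) * (b.factorial * ((b+2).descFactorial b)))
        * (n.choose a * n.choose (a+2)) := by ring

set_option maxHeartbeats 2000000 in
lemma newton_ineq (a b : ℕ) (lam : Fin (a + b + 2) → ℝ) :
    esymmS (a+b+2) a lam * esymmS (a+b+2) (a+2) lam * (((a+b+2).choose (a+1) : ℝ))^2
      ≤ (esymmS (a+b+2) (a+1) lam)^2 * ((a+b+2).choose a : ℝ) * ((a+b+2).choose (a+2) : ℝ) := by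
  set x := esymmS (a+b+2) a lam with hx
  set y := esymmS (a+b+2) (a+1) lam with hy
  set z := esymmS (a+b+2) (a+2) lam with hz
  by_cases hz0 : z = 0
  · rw [hz0, mul_zero, zero_mul]
    positivity
  -- the polynomial
  set P := ∏ i : Fin (a+b+2), (X + C (lam i)) with hP
  obtain ⟨hPRR, hPdeg⟩ := RR_prodP (a+b+2) lam
  -- Q = b-th derivative
  set Q := derivative^[b] P with hQ
  obtain ⟨hQRR, hQdeg⟩ := RR_iterate hPRR b (by omega)
  rw [hPdeg] at hQdeg
  have hQdeg' : Q.natDegree = a + 2 := by rw [hQdeg]; omega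
  have cP0 : P.coeff b = z := by
    have := esymmS_prod_coeff (a+b+2) (a+2) (by omega) lam
    rwa [show a+b+2 - (a+2) = b by omega] at this
  have cP1 : P.coeff (b+1) = y := by
    have := esymmS_prod_coeff (a+b+2) (a+1) (by omega) lam
    rwa [show a+b+2 - (a+1) = b+1 by omega] at this
  have cP2 : P.coeff (b+2) = x := by
    have := esymmS_prod_coeff (a+b+2) a (by omega) lam
    rwa [show a+b+2 - a = b+2 by omega] at this
  have cQ0 : Q.coeff 0 = (b.descFactorial b : ℝ) * z := by
    rw [hQ, coeff_iterate_derivative, nsmul_eq_mul, zero_add, cP0]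
  have cQ1 : Q.coeff 1 = ((b+1).descFactorial b : ℝ) * y := by
    rw [hQ, coeff_iterate_derivative, nsmul_eq_mul, show 1 + b = b + 1 by omega, cP1]
  have cQ2 : Q.coeff 2 = ((b+2).descFactorial b : ℝ) * x := by
    rw [hQ, coeff_iterate_derivative, nsmul_eq_mul, show 2 + b = b + 2 by omega, cP2]
  have hQ0ne : Q.coeff 0 ≠ 0 := by
    rw [cQ0]
    exact mul_ne_zero (Nat.cast_ne_zero.mpr (descFactorial_pos' (le_refl b)).ne') hz0
  -- reverse
  obtain ⟨hRRR, hRdeg⟩ := RR_reverse hQRR hQ0ne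
  set R := reverse Q with hR
  rw [hQdeg'] at hRdeg
  have cR : ∀ j, j ≤ a + 2 → R.coeff j = Q.coeff (a + 2 - j) := by
    intro j hj
    rw [hR, coeff_reverse, hQdeg', revAt_le hj]
  -- T = a-th derivative of R
  set T := derivative^[a] R with hT
  obtain ⟨hTRR, hTdeg⟩ := RR_iterate hRRR a (by omega)
  rw [hRdeg] at hTdeg
  have hTdeg' : T.natDegree = 2 := by rw [hTdeg]; omega
  have cT0 : T.coeff 0 = (a.descFactorial a : ℝ) * (((b+2).descFactorial b : ℝ) * x) := by
    rw [hT, coeff_iterate_derivative, nsmul_eq_mul, zero_add, cR a (by omega),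
      show a + 2 - a = 2 by omega, cQ2]
  have cT1 : T.coeff 1 = ((a+1).descFactorial a : ℝ) * (((b+1).descFactorial b : ℝ) * y) := by
    rw [hT, coeff_iterate_derivative, nsmul_eq_mul, show 1 + a = a + 1 by omega,
      cR (a+1) (by omega), show a + 2 - (a+1) = 1 by omega, cQ1]
  have cT2 : T.coeff 2 = ((a+2).descFactorial a : ℝ) * ((b.descFactorial b : ℝ) * z) := by
    rw [hT, coeff_iterate_derivative, nsmul_eq_mul, show 2 + a = a + 2 by omega,
      cR (a+2) (by omega), show a + 2 - (a+2) = 0 by omega, cQ0]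
  have disc := quad_disc hTRR hTdeg'
  rw [cT0, cT1, cT2] at disc
  -- now pure arithmetic
  rw [Nat.descFactorial_self, Nat.descFactorial_self, descFactorial_succ_self,
    descFactorial_succ_self] at disc
  -- disc : 4 * ((a+2).descF a * (b.fact * z)) * (a.fact * ((b+2).descF b * x)) ≤ ((a+1)! * ((b+1)! * y))^2
  have ident := newton_nat_ident a b
  have identR : ((a+1).factorial : ℝ)^2 * ((b+1).factorial : ℝ)^2 * (((a+b+2).choose (a+1) : ℝ))^2
      = (4 * ((a.factorial : ℝ) * (((a+2).descFactorial a : ℕ) : ℝ))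
          * ((b.factorial : ℝ) * (((b+2).descFactorial b : ℕ) : ℝ)))
        * (((a+b+2).choose a : ℝ) * (((a+b+2).choose (a+2) : ℕ) : ℝ)) := by
    have := congrArg (Nat.cast : ℕ → ℝ) ident
    push_cast at this
    linear_combination this
  set K : ℝ := 4 * ((a.factorial : ℝ) * ((a+2).descFactorial a : ℝ)) *
      ((b.factorial : ℝ) * ((b+2).descFactorial b : ℝ)) with hK
  have hKpos : 0 < K := by
    rw [hK]
    have h1 : (0:ℝ) < (a.factorial : ℝ) := by exact_mod_cast a.factorial_pos
    have h2 : (0:ℝ) < ((a+2).descFactorial a : ℝ) := by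
      exact_mod_cast descFactorial_pos' (by omega)
    have h3 : (0:ℝ) < (b.factorial : ℝ) := by exact_mod_cast b.factorial_pos
    have h4 : (0:ℝ) < ((b+2).descFactorial b : ℝ) := by
      exact_mod_cast descFactorial_pos' (by omega)
    positivity
  set L : ℝ := ((a+1).factorial : ℝ)^2 * ((b+1).factorial : ℝ)^2 with hL
  have disc' : K * (x * z) ≤ L * y^2 := by
    have h1 : K * (x * z) = 4 * ((((a+2).descFactorial a : ℕ) : ℝ) * ((b.factorial : ℝ) * z))
        * ((a.factorial : ℝ) * ((((b+2).descFactorial b : ℕ) : ℝ) * x)) := by rw [hK]; ring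
    have h2 : L * y^2 = (((a+1).factorial : ℝ) * (((b+1).factorial : ℝ) * y))^2 := by
      rw [hL]; ring
    rw [h1, h2]; exact disc
  have identR' : L * (((a+b+2).choose (a+1) : ℝ))^2 = K * (((a+b+2).choose a : ℝ) * ((a+b+2).choose (a+2) : ℝ)) := by
    rw [hK, hL]; linear_combination identR
  refine le_of_mul_le_mul_left ?_ hKpos
  calc K * (x * z * (((a+b+2).choose (a+1) : ℝ))^2)
      = (((a+b+2).choose (a+1) : ℝ))^2 * (K * (x * z)) := by ring
    _ ≤ (((a+b+2).choose (a+1) : ℝ))^2 * (L * y^2) := by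
        exact mul_le_mul_of_nonneg_left disc' (sq_nonneg _)
    _ = (L * (((a+b+2).choose (a+1) : ℝ))^2) * y^2 := by ring
    _ = (K * (((a+b+2).choose a : ℝ) * ((a+b+2).choose (a+2) : ℝ))) * y^2 := by rw [identR']
    _ = K * (y^2 * ((a+b+2).choose a : ℝ) * ((a+b+2).choose (a+2) : ℝ)) := by ring

noncomputable def pnorm (n m : ℕ) (lam : Fin n → ℝ) : ℝ := esymmS n m lam / (n.choose m)

lemma esymmS_zero (n : ℕ) (lam : Fin n → ℝ) : esymmS n 0 lam = 1 := by
  simp [esymmS]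

lemma pnorm_zero (n : ℕ) (lam : Fin n → ℝ) : pnorm n 0 lam = 1 := by
  simp [pnorm, esymmS_zero]

lemma newton_pn {n m : ℕ} (hm : 1 ≤ m) (hmn : m < n) (lam : Fin n → ℝ) :
    pnorm n (m-1) lam * pnorm n (m+1) lam ≤ (pnorm n m lam)^2 := by
  obtain ⟨a, rfl⟩ : ∃ a, m = a + 1 := ⟨m - 1, by omega⟩
  obtain ⟨b, rfl⟩ : ∃ b, n = a + b + 2 := ⟨n - a - 2, by omega⟩
  simp only [Nat.add_sub_cancel, pnorm]
  have c0 : (0:ℝ) < ((a+b+2).choose a : ℝ) := by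
    exact_mod_cast Nat.choose_pos (by omega)
  have c1 : (0:ℝ) < ((a+b+2).choose (a+1) : ℝ) := by
    exact_mod_cast Nat.choose_pos (by omega)
  have c2 : (0:ℝ) < ((a+b+2).choose (a+2) : ℝ) := by
    exact_mod_cast Nat.choose_pos (by omega)
  rw [div_mul_div_comm, div_pow, div_le_div_iff₀ (by positivity) (by positivity)]
  have h := newton_ineq a b lam
  nlinarith [h]

lemma pnorm_pos {n k m : ℕ} {lam : Fin n → ℝ} (hlam : lam ∈ GammaCone n k)
    (h1 : 1 ≤ m) (h2 : m ≤ k) (h3 : m ≤ n) : 0 < pnorm n m lam := by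
  have hc : (0:ℝ) < (n.choose m : ℝ) := by exact_mod_cast Nat.choose_pos h3
  exact div_pos (hlam m h1 h2) hc

lemma pn_chain {n k : ℕ} (hk1 : 1 ≤ k) (hkn : k < n) {lam : Fin n → ℝ}
    (hlam : lam ∈ GammaCone n k) :
    pnorm n (k+1) lam ≤ pnorm n 1 lam * pnorm n k lam := by
  induction k with
  | zero => omega
  | succ j ih =>
    rcases Nat.eq_zero_or_pos j with hj | hj
    · subst hj
      have h := newton_pn (le_refl 1) (by omega) lam
      rw [pnorm_zero, one_mul] at h
      nlinarith [h]
    · have hlam' : lam ∈ GammaCone n j := fun m hm1 hm2 => hlam m hm1 (by omega)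
      have hih := ih (by omega) (by omega) hlam'
      have hq := newton_pn (show 1 ≤ j + 1 by omega) hkn lam
      simp only [Nat.add_sub_cancel] at hq
      have hpj : 0 < pnorm n j lam := pnorm_pos hlam hj (by omega) (by omega)
      have hpj1 : 0 < pnorm n (j+1) lam := pnorm_pos hlam (by omega) (le_refl _) (by omega)
      nlinarith [mul_le_mul_of_nonneg_right hih hpj1.le, hq, hpj, hpj1]

lemma esymmS_one (n : ℕ) (lam : Fin n → ℝ) : esymmS n 1 lam = ∑ i, lam i := by
  rw [esymmS, Finset.powersetCard_one, Finset.sum_map]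
  simp

lemma esymmS_split (n k : ℕ) (lam : Fin n → ℝ) (i : Fin n) :
    esymmS n (k+1) lam = lam i * esymmSdel n k lam i + esymmSdel n (k+1) lam i := by
  have hu : (Finset.univ : Finset (Fin n)) = insert i (Finset.univ.erase i) :=
    (Finset.insert_erase (Finset.mem_univ i)).symm
  rw [esymmS]
  conv_lhs => rw [hu]
  rw [Finset.powersetCard_succ_insert (Finset.notMem_erase i _), Finset.sum_union]
  · rw [Finset.sum_image ?hinj]
    case hinj =>
      intro A hA B hB hAB
      have hiA : i ∉ A := fun h => (Finset.notMem_erase i _)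
        ((Finset.mem_powersetCard.mp hA).1 h)
      have hiB : i ∉ B := fun h => (Finset.notMem_erase i _)
        ((Finset.mem_powersetCard.mp hB).1 h)
      have := congrArg (fun S => Finset.erase S i) hAB
      simpa [Finset.erase_insert hiA, Finset.erase_insert hiB] using this
    rw [add_comm, esymmSdel, esymmSdel, Finset.mul_sum]
    congr 1
    apply Finset.sum_congr rfl
    intro A hA
    have hiA : i ∉ A := fun h => (Finset.notMem_erase i _)
      ((Finset.mem_powersetCard.mp hA).1 h)
    rw [Finset.prod_insert hiA]
  · rw [Finset.disjoint_left]
    intro A hA hA'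
    obtain ⟨B, hB, rfl⟩ := Finset.mem_image.mp hA'
    have : i ∉ insert i B := fun h => (Finset.notMem_erase i _)
      ((Finset.mem_powersetCard.mp hA).1 h)
    exact this (Finset.mem_insert_self i B)

lemma sum_lam_esymmSdel (n k : ℕ) (lam : Fin n → ℝ) :
    ∑ i, lam i * esymmSdel n k lam i = ((k:ℝ)+1) * esymmS n (k+1) lam := by
  have lhs_eq : ∑ i, lam i * esymmSdel n k lam i
      = ∑ x ∈ (Finset.univ : Finset (Fin n)).sigma
          (fun i => (Finset.univ.erase i).powersetCard k),
          ∏ l ∈ insert x.1 x.2, lam l := by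
    rw [Finset.sum_sigma]
    apply Finset.sum_congr rfl
    intro i _
    rw [esymmSdel, Finset.mul_sum]
    apply Finset.sum_congr rfl
    intro A hA
    have hiA : i ∉ A := fun h => (Finset.notMem_erase i _)
      ((Finset.mem_powersetCard.mp hA).1 h)
    rw [Finset.prod_insert hiA]
  have rhs_eq : ((k:ℝ)+1) * esymmS n (k+1) lam
      = ∑ x ∈ (Finset.univ.powersetCard (k+1)).sigma (fun B => B),
          ∏ l ∈ x.1, lam l := by
    rw [Finset.sum_sigma, esymmS, Finset.mul_sum]
    apply Finset.sum_congr rfl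
    intro B hB
    have hcard : B.card = k + 1 := (Finset.mem_powersetCard.mp hB).2
    rw [show (∑ s ∈ B, ∏ l ∈ (⟨B, s⟩ : Σ _ : Finset (Fin n), Fin n).fst, lam l)
        = ∑ _s ∈ B, ∏ l ∈ B, lam l from rfl, Finset.sum_const, hcard, nsmul_eq_mul]
    push_cast
    ring
  rw [lhs_eq, rhs_eq]
  apply Finset.sum_nbij' (fun x => ⟨insert x.1 x.2, x.1⟩) (fun y => ⟨y.2, y.1.erase y.2⟩)
  · rintro ⟨i, A⟩ hx
    rw [Finset.mem_sigma] at hx ⊢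
    obtain ⟨-, hA⟩ := hx
    obtain ⟨hsub, hcard⟩ := Finset.mem_powersetCard.mp hA
    have hiA : i ∉ A := fun h => (Finset.notMem_erase i _) (hsub h)
    constructor
    · rw [Finset.mem_powersetCard]
      exact ⟨Finset.subset_univ _, by rw [Finset.card_insert_of_notMem hiA, hcard]⟩
    · exact Finset.mem_insert_self _ _
  · rintro ⟨B, j⟩ hy
    rw [Finset.mem_sigma] at hy ⊢
    obtain ⟨hB, hj⟩ := hy
    obtain ⟨-, hcard⟩ := Finset.mem_powersetCard.mp hB
    refine ⟨Finset.mem_univ _, ?_⟩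
    rw [Finset.mem_powersetCard]
    constructor
    · intro l hl
      rw [Finset.mem_erase] at hl ⊢
      exact ⟨hl.1, Finset.mem_univ _⟩
    · rw [Finset.card_erase_of_mem hj, hcard]
      omega
  · rintro ⟨i, A⟩ hx
    rw [Finset.mem_sigma] at hx
    obtain ⟨-, hA⟩ := hx
    have hiA : i ∉ A := fun h => (Finset.notMem_erase i _)
      ((Finset.mem_powersetCard.mp hA).1 h)
    simp [Finset.erase_insert hiA]
  · rintro ⟨B, j⟩ hy
    rw [Finset.mem_sigma] at hy
    simp [Finset.insert_erase hy.2]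
  · rintro ⟨i, A⟩ hx
    rfl

end NewtonAux

/-- For `1 ≤ k < n` and `lam ∈ Γ_k`,
`Σ_i S_{k−1}(lam|i)·lam_i² ≥ (k/n)·S_1(lam)·S_k(lam)`; equivalently
`(k+1)·S_{k+1}(lam) ≤ ((n−k)/n)·S_1(lam)·S_k(lam)`. -/
theorem sum_esymmSdel_sq_ge (n k : ℕ) (hk1 : 1 ≤ k) (hkn : k < n)
    (lam : Fin n → ℝ) (hlam : lam ∈ GammaCone n k) :
    (∑ i, esymmSdel n (k - 1) lam i * lam i ^ 2 ≥
        ((k : ℝ) / n) * esymmS n 1 lam * esymmS n k lam) ∧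
      ((k : ℝ) + 1) * esymmS n (k + 1) lam ≤
        (((n : ℝ) - k) / n) * esymmS n 1 lam * esymmS n k lam := by
  obtain ⟨a, rfl⟩ : ∃ a, k = a + 1 := ⟨k - 1, by omega⟩
  simp only [Nat.add_sub_cancel]
  have nn : (0:ℝ) < n := by exact_mod_cast (show 0 < n by omega)
  have c1pos : (0:ℝ) < (n.choose (a+1) : ℝ) := by
    exact_mod_cast Nat.choose_pos (by omega)
  have c2pos : (0:ℝ) < (n.choose (a+1+1) : ℝ) := by
    exact_mod_cast Nat.choose_pos (show a+1+1 ≤ n by omega)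
  set S1 := esymmS n 1 lam with hS1
  set Sk := esymmS n (a+1) lam with hSk
  set Sk1 := esymmS n (a+1+1) lam with hSk1
  set c1 := (n.choose (a+1) : ℝ) with hc1
  set c2 := (n.choose (a+1+1) : ℝ) with hc2
  -- chain inequality, unfolded
  have hchain := pn_chain hk1 hkn hlam
  have hchain' : Sk1 * ((n:ℝ) * c1) ≤ S1 * Sk * c2 := by
    have h := hchain
    simp only [pnorm, Nat.choose_one_right] at h
    rw [← hS1, ← hSk, ← hSk1, ← hc1, ← hc2] at h
    rw [div_mul_div_comm] at h
    have h2 := (div_le_div_iff₀ (by positivity) (by positivity)).mp h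
    linarith [h2]
  -- choose recurrence
  have hccN := Nat.choose_succ_right_eq n (a+1)
  have hcc : c2 * ((a:ℝ) + 2) = c1 * ((n:ℝ) - ((a:ℝ)+1)) := by
    have hcast := congrArg (Nat.cast : ℕ → ℝ) hccN
    push_cast [Nat.cast_sub (show a+1 ≤ n by omega)] at hcast
    linarith [hcast]
  -- part 2
  have goal2 : ((a:ℝ)+1+1) * Sk1 ≤ (((n:ℝ) - ((a:ℝ)+1)) / n) * S1 * Sk := by
    rw [div_mul_eq_mul_div, div_mul_eq_mul_div, le_div_iff₀ nn]
    refine le_of_mul_le_mul_left ?_ c1pos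
    calc c1 * (((a:ℝ)+1+1) * Sk1 * n)
        = ((a:ℝ)+2) * (Sk1 * ((n:ℝ) * c1)) := by ring
      _ ≤ ((a:ℝ)+2) * (S1 * Sk * c2) := by
          exact mul_le_mul_of_nonneg_left hchain' (by positivity)
      _ = (c2 * ((a:ℝ)+2)) * (S1 * Sk) := by ring
      _ = (c1 * ((n:ℝ) - ((a:ℝ)+1))) * (S1 * Sk) := by rw [hcc]
      _ = c1 * (((n:ℝ) - ((a:ℝ)+1)) * S1 * Sk) := by ring
  -- the identity
  have hid : ∑ i, esymmSdel n a lam i * lam i ^ 2 = S1 * Sk - ((a:ℝ)+1+1) * Sk1 := by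
    have hsplit : ∀ i, esymmSdel n a lam i * lam i ^ 2
        = lam i * Sk - lam i * esymmSdel n (a+1) lam i := by
      intro i
      have h := esymmS_split n a lam i
      rw [← hSk] at h
      linear_combination (-(lam i)) * h
    calc ∑ i, esymmSdel n a lam i * lam i ^ 2
        = ∑ i, (lam i * Sk - lam i * esymmSdel n (a+1) lam i) := by
          exact Finset.sum_congr rfl (fun i _ => hsplit i)
      _ = (∑ i, lam i) * Sk - ∑ i, lam i * esymmSdel n (a+1) lam i := by
          rw [Finset.sum_sub_distrib, Finset.sum_mul]
      _ = S1 * Sk - ((a:ℝ)+1+1) * Sk1 := by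
          rw [sum_lam_esymmSdel, ← esymmS_one n lam, ← hS1, ← hSk1]
          push_cast
          ring
  constructor
  · rw [ge_iff_le, hid]
    have heq : ((((a:ℕ):ℝ)+1) / n) * S1 * Sk
        = S1 * Sk - (((n:ℝ) - ((a:ℝ)+1)) / n) * S1 * Sk := by
      field_simp
      ring
    push_cast
    push_cast at goal2
    linarith [goal2, heq]
  · push_cast
    push_cast at goal2
    linarith [goal2]
end

section
/- Let 1 ≤ k < n be integers, let λ = (λ_1,…,λ_n) ∈ Γ_k, and let i ∈ {1,…,n} be an index with λ_i < 0. Write f = S_k(λ). Then f (λ_i + S_1(λ|i) − (k+1) S_k(λ|i)/S_{k−1}(λ|i)) + (k+1)(S_k(λ|i)²/S_{k−1}(λ|i) − S_{k+1}(λ|i)) ≥ (n/(n−k)) S_{k−1}(λ|i) λ_i². (Here S_{k−1}(λ|i) > 0 since λ ∈ Γ_k.) -/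
open Finset

namespace KeyClaimAux
set_option linter.unusedSectionVars false
variable {ι : Type*} [DecidableEq ι] (ν : ι → ℝ)

noncomputable def E (m : ℕ) (s : Finset ι) : ℝ :=
  ∑ A ∈ s.powersetCard m, ∏ j ∈ A, ν j

@[simp] lemma E_zero (s : Finset ι) : E ν 0 s = 1 := by
  simp [E, Finset.powersetCard_zero]

lemma E_eq_zero {m : ℕ} {s : Finset ι} (h : s.card < m) : E ν m s = 0 := by
  rw [E, Finset.powersetCard_eq_empty.mpr h, Finset.sum_empty]

lemma E_insert {a : ι} {s : Finset ι} (h : a ∉ s) (m : ℕ) :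
    E ν (m + 1) (insert a s) = ν a * E ν m s + E ν (m + 1) s := by
  rw [E, Finset.powersetCard_succ_insert h, Finset.sum_union]
  · rw [Finset.sum_image (fun A hA B hB hAB => by
      have hA' : a ∉ A := fun hx => h ((Finset.mem_powersetCard.mp hA).1 hx)
      have hB' : a ∉ B := fun hx => h ((Finset.mem_powersetCard.mp hB).1 hx)
      rw [← Finset.erase_insert hA', hAB, Finset.erase_insert hB'])]
    rw [add_comm]
    congr 1
    · rw [E, Finset.mul_sum]
      refine Finset.sum_congr rfl fun A hA => ?_
      have hA' : a ∉ A := fun hx => h ((Finset.mem_powersetCard.mp hA).1 hx)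
      rw [Finset.prod_insert hA']
  · rw [Finset.disjoint_right]
    intro A hA hA2
    obtain ⟨B, hB, rfl⟩ := Finset.mem_image.mp hA
    exact h ((Finset.mem_powersetCard.mp hA2).1 (Finset.mem_insert_self a B))

lemma E_erase {j : ι} {s : Finset ι} (h : j ∈ s) (m : ℕ) :
    E ν (m + 1) s = ν j * E ν m (s.erase j) + E ν (m + 1) (s.erase j) := by
  conv_lhs => rw [← Finset.insert_erase h]
  exact E_insert ν (Finset.notMem_erase j s) m

lemma sum_nu_erase_E (s : Finset ι) : ∀ m : ℕ,
    ∑ j ∈ s, ν j * E ν m (s.erase j) = ((m : ℝ) + 1) * E ν (m + 1) s := by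
  induction s using Finset.induction_on with
  | empty => intro m; simp [E_eq_zero ν (show (∅ : Finset ι).card < m + 1 by simp)]
  | @insert a s ha ih =>
    intro m
    have herase : ∀ j ∈ s, (insert a s).erase j = insert a (s.erase j) := fun j hj => by
      rw [Finset.erase_insert_of_ne (by rintro rfl; exact ha hj)]
    rw [Finset.sum_insert ha, Finset.erase_insert ha,
      Finset.sum_congr rfl (fun j hj => by rw [herase j hj])]
    cases m with
    | zero =>
      have h1 := ih 0
      simp only [E_zero, mul_one] at h1 ⊢
      rw [E_insert ν ha 0, h1]
      simp only [E_zero, mul_one]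
      ring
    | succ m =>
      have hrw : ∀ j ∈ s, ν j * E ν (m + 1) (insert a (s.erase j)) =
          ν a * (ν j * E ν m (s.erase j)) + ν j * E ν (m + 1) (s.erase j) := fun j hj => by
        rw [E_insert ν (fun hx => ha (Finset.mem_of_mem_erase hx)) m]; ring
      rw [Finset.sum_congr rfl hrw, Finset.sum_add_distrib, ← Finset.mul_sum, ih m, ih (m + 1),
        E_insert ν ha (m + 1)]
      push_cast
      ring

lemma sum_erase_E (s : Finset ι) : ∀ m : ℕ,
    ∑ j ∈ s, E ν m (s.erase j) = ((s.card : ℝ) - m) * E ν m s := by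
  induction s using Finset.induction_on with
  | empty => intro m
             cases m with
             | zero => simp
             | succ m => simp [E_eq_zero ν (show (∅ : Finset ι).card < m + 1 by simp)]
  | @insert a s ha ih =>
    intro m
    have herase : ∀ j ∈ s, (insert a s).erase j = insert a (s.erase j) := fun j hj => by
      rw [Finset.erase_insert_of_ne (by rintro rfl; exact ha hj)]
    rw [Finset.sum_insert ha, Finset.erase_insert ha,
      Finset.sum_congr rfl (fun j hj => by rw [herase j hj]), Finset.card_insert_of_notMem ha]
    cases m with
    | zero => simp [E_zero]; ring
    | succ m =>
      have hrw : ∀ j ∈ s, E ν (m + 1) (insert a (s.erase j)) =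
          ν a * E ν m (s.erase j) + E ν (m + 1) (s.erase j) := fun j hj =>
        E_insert ν (fun hx => ha (Finset.mem_of_mem_erase hx)) m
      rw [Finset.sum_congr rfl hrw, Finset.sum_add_distrib, ← Finset.mul_sum, ih m, ih (m + 1),
        E_insert ν ha m]
      push_cast
      ring

noncomputable def Bq : ℕ → Finset ι → ℝ
  | 0, _ => 1
  | (b+1), t => E ν (b+1) t ^ 2 - E ν b t * E ν (b+2) t

lemma D_eq {s : Finset ι} {j l : ι} (hj : j ∈ s) (hl : l ∈ s) (a : ℕ) :
    E ν a (s.erase j) * E ν (a+1) (s.erase l) - E ν (a+1) (s.erase j) * E ν a (s.erase l)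
      = (ν j - ν l) * Bq ν a ((s.erase j).erase l) := by
  by_cases hjl : j = l
  · subst hjl; ring
  · have hlj : l ∈ s.erase j := Finset.mem_erase.mpr ⟨Ne.symm hjl, hl⟩
    have hjl' : j ∈ s.erase l := Finset.mem_erase.mpr ⟨hjl, hj⟩
    have hcomm : (s.erase l).erase j = (s.erase j).erase l := Finset.erase_right_comm
    cases a with
    | zero =>
      rw [show Bq ν 0 ((s.erase j).erase l) = 1 from rfl]
      rw [E_erase ν hlj 0, E_erase ν hjl' 0, hcomm]
      simp only [E_zero]
      ring
    | succ b =>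
      rw [E_erase ν hlj b, E_erase ν hlj (b+1), E_erase ν hjl' b, E_erase ν hjl' (b+1), hcomm]
      show _ = (ν j - ν l) * (E ν (b+1) _ ^ 2 - E ν b _ * E ν (b+2) _)
      ring

lemma antisym_sum (s : Finset ι) (f g : ι → ℝ) :
    ∑ j ∈ s, ∑ l ∈ s, (ν j - ν l) * (f j * g l - g j * f l)
      = 2 * ((∑ j ∈ s, ν j * f j) * (∑ j ∈ s, g j) - (∑ j ∈ s, ν j * g j) * (∑ j ∈ s, f j)) := by
  have hin : ∀ j ∈ s, ∑ l ∈ s, (ν j - ν l) * (f j * g l - g j * f l)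
      = ν j * f j * (∑ l ∈ s, g l) - ν j * g j * (∑ l ∈ s, f l)
        - f j * (∑ l ∈ s, ν l * g l) + g j * (∑ l ∈ s, ν l * f l) := by
    intro j hj
    rw [Finset.mul_sum, Finset.mul_sum, Finset.mul_sum, Finset.mul_sum, ← Finset.sum_sub_distrib,
      ← Finset.sum_sub_distrib, ← Finset.sum_add_distrib]
    exact Finset.sum_congr rfl fun l _ => by ring
  rw [Finset.sum_congr rfl hin, Finset.sum_add_distrib, Finset.sum_sub_distrib,
    Finset.sum_sub_distrib, ← Finset.sum_mul, ← Finset.sum_mul, ← Finset.sum_mul, ← Finset.sum_mul]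
  ring

lemma newton_identity (s : Finset ι) (a : ℕ) :
    2 * (((a : ℝ) + 1) * E ν (a+1) s * (((s.card : ℝ) - ((a : ℝ) + 1)) * E ν (a+1) s)
       - ((a : ℝ) + 2) * E ν (a+2) s * (((s.card : ℝ) - (a : ℝ)) * E ν a s))
      = ∑ j ∈ s, ∑ l ∈ s, (ν j - ν l)^2 * Bq ν a ((s.erase j).erase l) := by
  have hD : ∀ j ∈ s, ∀ l ∈ s, (ν j - ν l)^2 * Bq ν a ((s.erase j).erase l)
      = (ν j - ν l) * ((fun j => E ν a (s.erase j)) j * (fun j => E ν (a+1) (s.erase j)) l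
        - (fun j => E ν (a+1) (s.erase j)) j * (fun j => E ν a (s.erase j)) l) := by
    intro j hj l hl
    simp only
    rw [D_eq ν hj hl a]
    ring
  rw [Finset.sum_congr rfl fun j hj => Finset.sum_congr rfl fun l hl => hD j hj l hl,
    antisym_sum ν s (fun j => E ν a (s.erase j)) (fun j => E ν (a+1) (s.erase j)),
    sum_nu_erase_E ν s a, sum_nu_erase_E ν s (a+1), sum_erase_E ν s a, sum_erase_E ν s (a+1)]
  push_cast
  ring

lemma Bq_nonneg : ∀ (N : ℕ) (t : Finset ι), t.card ≤ N → ∀ a, 0 ≤ Bq ν a t := by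
  intro N
  induction N with
  | zero =>
    intro t ht a
    have ht0 : t = ∅ := Finset.card_eq_zero.mp (Nat.le_zero.mp ht)
    subst ht0
    cases a with
    | zero => norm_num [Bq]
    | succ b =>
      show (0:ℝ) ≤ E ν (b+1) ∅ ^ 2 - E ν b ∅ * E ν (b+2) ∅
      rw [E_eq_zero ν (by simp : (∅ : Finset ι).card < b + 1),
        E_eq_zero ν (by simp : (∅ : Finset ι).card < b + 2)]
      norm_num
  | succ N ihN =>
    intro t ht a
    cases a with
    | zero => norm_num [Bq]
    | succ b =>
      show (0:ℝ) ≤ E ν (b+1) t ^ 2 - E ν b t * E ν (b+2) t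
      by_cases hP : 0 < E ν b t * E ν (b+2) t
      · have hcard : b + 2 ≤ t.card := by
          by_contra hc
          rw [E_eq_zero ν (not_le.mp hc), mul_zero] at hP
          exact lt_irrefl 0 hP
        have hsum : 0 ≤ ∑ j ∈ t, ∑ l ∈ t, (ν j - ν l)^2 * Bq ν b ((t.erase j).erase l) := by
          refine Finset.sum_nonneg fun j hj => Finset.sum_nonneg fun l hl => ?_
          by_cases hjl : j = l
          · subst hjl; simp
          · refine mul_nonneg (sq_nonneg _) (ihN _ ?_ b)
            have h1 : l ∈ t.erase j := Finset.mem_erase.mpr ⟨Ne.symm hjl, hl⟩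
            have h2 : j ∈ t := hj
            have e1 : ((t.erase j).erase l).card = t.card - 2 := by
              rw [Finset.card_erase_of_mem h1, Finset.card_erase_of_mem h2]
              omega
            omega
        rw [← newton_identity ν t b] at hsum
        have hc2 : ((b:ℝ) + 2) ≤ (t.card : ℝ) := by exact_mod_cast hcard
        have hA : (0:ℝ) < ((b:ℝ) + 1) * ((t.card : ℝ) - ((b:ℝ) + 1)) := by
          apply mul_pos <;> linarith
        by_contra hlt
        push_neg at hlt
        have h3 : ((b:ℝ) + 1) * ((t.card : ℝ) - ((b:ℝ) + 1)) * (E ν (b+1) t ^ 2)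
            < ((b:ℝ) + 1) * ((t.card : ℝ) - ((b:ℝ) + 1)) * (E ν b t * E ν (b+2) t) := by
          apply mul_lt_mul_of_pos_left _ hA
          linarith
        nlinarith [h3, hsum, mul_pos hP (show (0:ℝ) < (t.card:ℝ) + 1 by linarith)]
      · nlinarith [sq_nonneg (E ν (b+1) t), not_lt.mp hP]

lemma newton_ineq (s : Finset ι) (a : ℕ) :
    ((a:ℝ) + 2) * ((s.card : ℝ) - (a:ℝ)) * (E ν (a+2) s * E ν a s)
      ≤ ((a:ℝ) + 1) * ((s.card : ℝ) - ((a:ℝ) + 1)) * E ν (a+1) s ^ 2 := by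
  have hsum : 0 ≤ ∑ j ∈ s, ∑ l ∈ s, (ν j - ν l)^2 * Bq ν a ((s.erase j).erase l) :=
    Finset.sum_nonneg fun j _ => Finset.sum_nonneg fun l _ =>
      mul_nonneg (sq_nonneg _) (Bq_nonneg ν _ _ le_rfl a)
  rw [← newton_identity ν s a] at hsum
  nlinarith [hsum]

lemma deletion : ∀ (r : ℕ) (s : Finset ι),
    (∀ m, 1 ≤ m → m ≤ r + 1 → 0 < E ν m s) → ∀ j ∈ s, ∀ m, m ≤ r → 0 < E ν m (s.erase j) := by
  intro r
  induction r with
  | zero =>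
    intro s hs j hj m hm
    have h0 : m = 0 := Nat.le_zero.mp hm
    subst h0; simp
  | succ r ih =>
    intro s hs j hj m hm
    rcases Nat.lt_or_ge m (r+1) with h | h
    · exact ih s (fun m h1 h2 => hs m h1 (by omega)) j hj m (by omega)
    · have hm' : m = r + 1 := by omega
      subst hm'
      have hp : 0 < E ν r (s.erase j) :=
        ih s (fun m h1 h2 => hs m h1 (by omega)) j hj r le_rfl
      have h1 : 0 < ν j * E ν r (s.erase j) + E ν (r+1) (s.erase j) := by
        rw [← E_erase ν hj r]; exact hs (r+1) (by omega) (by omega)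
      have h2 : 0 < ν j * E ν (r+1) (s.erase j) + E ν (r+2) (s.erase j) := by
        rw [← E_erase ν hj (r+1)]; exact hs (r+2) (by omega) (by omega)
      have hBq : 0 ≤ E ν (r+1) (s.erase j) ^ 2 - E ν r (s.erase j) * E ν (r+2) (s.erase j) := by
        have := Bq_nonneg ν (s.erase j).card (s.erase j) le_rfl (r+1)
        simpa [Bq] using this
      by_contra hq
      push_neg at hq
      nlinarith [mul_nonneg h1.le (neg_nonneg.mpr hq), mul_pos h2 hp, hBq]

end KeyClaimAux

open KeyClaimAux in

/-- the step `A ≥ 0` (case `lam_i < 0`) in the proof of the key claim of the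
gradient estimate: for `1 ≤ k < n`, `lam ∈ Γ_k` and an index `i` with `lam_i < 0`, writing
`f = S_k(lam)`, one has
`f(lam_i + S_1(lam|i) − (k+1)S_k(lam|i)/S_{k−1}(lam|i))
  + (k+1)(S_k(lam|i)²/S_{k−1}(lam|i) − S_{k+1}(lam|i)) ≥ (n/(n−k))·S_{k−1}(lam|i)·lam_i²`. -/

theorem key_claim_neg_case (n k : ℕ) (hk1 : 1 ≤ k) (hkn : k < n)
    (lam : Fin n → ℝ) (hlam : lam ∈ GammaCone n k) (i : Fin n) (hi : lam i < 0) :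
    esymmS n k lam *
        (lam i + esymmSdel n 1 lam i -
          ((k : ℝ) + 1) * esymmSdel n k lam i / esymmSdel n (k - 1) lam i) +
      ((k : ℝ) + 1) *
        (esymmSdel n k lam i ^ 2 / esymmSdel n (k - 1) lam i - esymmSdel n (k + 1) lam i) ≥
      ((n : ℝ) / ((n : ℝ) - k)) * esymmSdel n (k - 1) lam i * lam i ^ 2 := by
  classical
  obtain ⟨K, rfl⟩ : ∃ K, k = K + 1 := ⟨k - 1, by omega⟩
  have hE1 : ∀ m : ℕ, esymmSdel n m lam i = E lam m ((univ : Finset (Fin n)).erase i) :=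
    fun _ => rfl
  have hE2 : esymmS n (K + 1) lam = E lam (K + 1) univ := rfl
  have hGam : ∀ m, 1 ≤ m → m ≤ K + 1 → 0 < E lam m (univ : Finset (Fin n)) :=
    fun m h1 h2 => hlam m h1 h2
  simp only [hE1, hE2, Nat.add_sub_cancel]
  push_cast
  set s₀ : Finset (Fin n) := (univ : Finset (Fin n)).erase i with hs₀def
  have hcard : (s₀.card : ℝ) = (n : ℝ) - 1 := by
    rw [hs₀def, Finset.card_erase_of_mem (Finset.mem_univ i), Finset.card_univ,
      Fintype.card_fin]
    have h1 : 1 ≤ n := by omega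
    push_cast [h1]
    ring
  -- positivity of σ_r
  have hσpos : ∀ r : ℕ, r ≤ K + 1 → 0 < E lam r s₀ := by
    intro r
    induction r with
    | zero => intro _; simp
    | succ r ih =>
      intro hr
      have h1 : E lam (r+1) univ = lam i * E lam r s₀ + E lam (r+1) s₀ :=
        E_erase lam (Finset.mem_univ i) r
      have h2 : 0 < E lam (r+1) univ := hGam (r+1) (by omega) hr
      have h3 := ih (by omega)
      nlinarith [mul_pos (neg_pos.mpr hi) h3]
  have hσK : 0 < E lam K s₀ := hσpos K (by omega)
  have hσk : 0 < E lam (K+1) s₀ := hσpos (K+1) le_rfl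
  have hfpos : 0 < E lam (K+1) (univ : Finset (Fin n)) := hGam (K+1) (by omega) le_rfl
  have hf : E lam (K+1) (univ : Finset (Fin n)) = lam i * E lam K s₀ + E lam (K+1) s₀ :=
    E_erase lam (Finset.mem_univ i) K
  -- A₀ ≥ 0
  have hjn : ∀ j ∈ s₀, 0 ≤ E lam K (s₀.erase j) := fun j hj =>
    (deletion lam K s₀ (fun m _ h2 => hσpos m h2) j hj K le_rfl).le
  have hident : ∑ j ∈ s₀, (lam j)^2 * E lam K (s₀.erase j)
      = E lam 1 s₀ * E lam (K+1) s₀ - ((K:ℝ)+2) * E lam (K+2) s₀ := by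
    have e1 : ∀ j ∈ s₀, (lam j)^2 * E lam K (s₀.erase j)
        = lam j * E lam (K+1) s₀ - lam j * E lam (K+1) (s₀.erase j) := fun j hj => by
      rw [E_erase lam hj K]; ring
    rw [Finset.sum_congr rfl e1, Finset.sum_sub_distrib, ← Finset.sum_mul,
      sum_nu_erase_E lam s₀ (K+1)]
    have e2 : ∑ j ∈ s₀, lam j = E lam 1 s₀ := by
      have := sum_nu_erase_E lam s₀ 0
      simpa using this
    rw [e2]
    push_cast
    ring
  have hA : 0 ≤ E lam 1 s₀ * E lam (K+1) s₀ - ((K:ℝ)+2) * E lam (K+2) s₀ := by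
    rw [← hident]
    exact Finset.sum_nonneg fun j hj => mul_nonneg (sq_nonneg _) (hjn j hj)
  -- Newton
  have hNewton := newton_ineq lam s₀ K
  rw [hcard] at hNewton
  have hN : 0 ≤ ((K:ℝ)+1) * ((n:ℝ) - 1 - ((K:ℝ)+1)) * E lam (K+1) s₀ ^ 2
      - ((K:ℝ)+2) * ((n:ℝ) - ((K:ℝ)+1)) * (E lam K s₀ * E lam (K+2) s₀) := by
    nlinarith [hNewton]
  have hnk : (0:ℝ) < (n:ℝ) - ((K:ℝ)+1) := by
    have : ((K:ℝ)+1+1) ≤ (n:ℝ) := by exact_mod_cast hkn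
    linarith
  -- G ≥ 0
  set σ1 := E lam 1 s₀
  set σK := E lam K s₀
  set σk := E lam (K+1) s₀
  set σK2 := E lam (K+2) s₀
  set x := lam i
  set G : ℝ := ((n:ℝ) - ((K:ℝ)+1)) * (σ1*σk - ((K:ℝ)+2)*σK2)
      + ((n:ℝ) - ((K:ℝ)+1)) * x * (σ1*σK - ((K:ℝ)+1)*σk) - ((K:ℝ)+1)*σK*x^2 with hGdef
  have hGs : G * σk = ((n:ℝ) - ((K:ℝ)+1)) * (σ1*σk - ((K:ℝ)+2)*σK2) * (x*σK + σk)
      + (-x) * (((K:ℝ)+1) * ((n:ℝ) - 1 - ((K:ℝ)+1)) * σk^2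
          - ((K:ℝ)+2)*((n:ℝ) - ((K:ℝ)+1))*(σK*σK2))
      + ((K:ℝ)+1) * (-x) * σk * (x*σK + σk) := by
    rw [hGdef]; ring
  have hxneg : (0:ℝ) < -x := neg_pos.mpr hi
  have hfpos' : 0 < x*σK + σk := by rw [← hf]; exact hfpos
  have hGσ : 0 ≤ G * σk := by
    rw [hGs]
    have t1 : 0 ≤ ((n:ℝ) - ((K:ℝ)+1)) * (σ1*σk - ((K:ℝ)+2)*σK2) * (x*σK + σk) :=
      mul_nonneg (mul_nonneg hnk.le hA) hfpos'.le
    have t2 : 0 ≤ (-x) * (((K:ℝ)+1) * ((n:ℝ) - 1 - ((K:ℝ)+1)) * σk^2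
        - ((K:ℝ)+2)*((n:ℝ) - ((K:ℝ)+1))*(σK*σK2)) := mul_nonneg hxneg.le hN
    have t3 : 0 ≤ ((K:ℝ)+1) * (-x) * σk * (x*σK + σk) :=
      mul_nonneg (mul_nonneg (mul_nonneg (by positivity) hxneg.le) hσk.le) hfpos'.le
    linarith
  have hG : 0 ≤ G := le_of_mul_le_mul_right (by simpa using hGσ) hσk
  -- final
  rw [ge_iff_le, ← sub_nonneg]
  have heq : E lam (K+1) (univ : Finset (Fin n)) *
        (x + σ1 - ((K:ℝ)+1+1) * σk / σK) + ((K:ℝ)+1+1) * (σk^2/σK - σK2)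
      - ((n:ℝ)/((n:ℝ)-((K:ℝ)+1))) * σK * x^2 = G / ((n:ℝ) - ((K:ℝ)+1)) := by
    rw [hf, hGdef]
    field_simp
    ring
  have hfin : 0 ≤ G / ((n:ℝ) - ((K:ℝ)+1)) := div_nonneg hG hnk.le
  rw [← heq] at hfin
  linarith [hfin]
end
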